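/- arXiv:2101.12682 — 6 statements merged into one kernel-verified Lean document; each statement's English description precedes it below -/
import Mathlib

section
/- Let X ⊆ Σ^{ℤ^d} be a tiling space having a safe symbol α (i.e. v_i(α,σ) = v_i(σ,α) = 1 for all σ ∈ Σ and all i ∈ {1,…,d}). Define F : Σ^{ℤ^d} → Σ^{ℤ^d} by F(x)_c = α if c ∈ Def(x) and F(x)_c = x_c otherwise. Then F is a cellular automaton with neighbourhood {0, ±e_1, …, ±e_d}, F(x) = x for every x ∈ X, and F(x̃) ∈ X for every finite perturbation x̃ ∈ FPert(X); that is, F stabilises X from finite perturbations in one step. -/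
/-- The `i`-th standard basis vector of `ℤ^d`. -/
def stdBasis (d : ℕ) (i : Fin d) : Fin d → ℤ := fun j => if j = i then 1 else 0

/-- The set of cells where two configurations disagree. -/
def diffSet {d : ℕ} {A : Type} (x y : (Fin d → ℤ) → A) : Set (Fin d → ℤ) :=
  {i | x i ≠ y i}

/-- Finite perturbations of elements of `X`. -/
def FPert {d : ℕ} {A : Type} (X : Set ((Fin d → ℤ) → A)) : Set ((Fin d → ℤ) → A) :=
  {y | ∃ x ∈ X, (diffSet x y).Finite}

/-- The set of defective cells of a configuration, for the nearest-neighbour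
constraints given by `v`. -/
def Defect {d : ℕ} {A : Type} (v : Fin d → A → A → Bool) (x : (Fin d → ℤ) → A) :
    Set (Fin d → ℤ) :=
  {c | ∃ i : Fin d,
    v i (x (c - stdBasis d i)) (x c) = false ∨ v i (x c) (x (c + stdBasis d i)) = false}

/-- The von Neumann neighbourhood `{0, ±e_1, …, ±e_d}` of the origin. -/
def vonNeumann (d : ℕ) : Set (Fin d → ℤ) :=
  {n | n = 0 ∨ ∃ i : Fin d, n = stdBasis d i ∨ n = -stdBasis d i}

/-- If a tiling space `X` has a safe symbol `α`, then the map `F` replacing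
every defective cell by `α` is a cellular automaton with von Neumann
neighbourhood that fixes `X` and maps every finite perturbation of `X`
into `X`: it stabilises `X` from finite perturbations in one step. -/
theorem stmt0 {d : ℕ} (hd : 1 ≤ d) {A : Type} [Fintype A]
    (v : Fin d → A → A → Bool)
    (X : Set ((Fin d → ℤ) → A))
    (hX : X = {x | ∀ (c : Fin d → ℤ) (i : Fin d), v i (x c) (x (c + stdBasis d i)) = true})
    (hXne : X.Nonempty)
    (α : A) (hsafe : ∀ (σ : A) (i : Fin d), v i α σ = true ∧ v i σ α = true)
    (F : ((Fin d → ℤ) → A) → ((Fin d → ℤ) → A))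
    (hF : ∀ (x : (Fin d → ℤ) → A) (c : Fin d → ℤ),
      (c ∈ Defect v x → F x c = α) ∧ (c ∉ Defect v x → F x c = x c)) :
    (∃ f : ((vonNeumann d) → A) → A, ∀ x c, F x c = f (fun n => x (c + n.val))) ∧
    (∀ x ∈ X, F x = x) ∧
    (∀ y ∈ FPert X, F y ∈ X) := by
  classical
  refine ⟨⟨fun g => if (∃ i : Fin d,
      v i (g ⟨-stdBasis d i, Or.inr ⟨i, Or.inr rfl⟩⟩) (g ⟨0, Or.inl rfl⟩) = false ∨
      v i (g ⟨0, Or.inl rfl⟩) (g ⟨stdBasis d i, Or.inr ⟨i, Or.inl rfl⟩⟩) = false)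
      then α else g ⟨0, Or.inl rfl⟩, ?_⟩, ?_, ?_⟩
  · intro x c
    by_cases hc : c ∈ Defect v x
    · rw [(hF x c).1 hc]
      beta_reduce
      rw [if_pos]
      obtain ⟨i, hi⟩ := hc
      exact ⟨i, by simpa [sub_eq_add_neg] using hi⟩
    · rw [(hF x c).2 hc]
      beta_reduce
      rw [if_neg]
      · simp
      · rintro ⟨i, hi⟩
        exact hc ⟨i, by simpa [sub_eq_add_neg] using hi⟩
  · intro x hx
    funext c
    refine (hF x c).2 ?_
    rintro ⟨i, hi⟩
    rw [hX] at hx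
    rcases hi with h | h
    · have h2 := hx (c - stdBasis d i) i
      rw [sub_add_cancel] at h2
      rw [h2] at h
      simp at h
    · rw [hx c i] at h
      simp at h
  · intro y _
    rw [hX]
    intro c i
    by_cases hc : c ∈ Defect v y
    · rw [(hF y c).1 hc]
      exact (hsafe _ i).1
    · rw [(hF y c).2 hc]
      by_cases hc' : (c + stdBasis d i) ∈ Defect v y
      · rw [(hF y (c + stdBasis d i)).1 hc']
        exact (hsafe _ i).2
      · rw [(hF y (c + stdBasis d i)).2 hc']
        have hne : v i (y c) (y (c + stdBasis d i)) ≠ false :=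
          fun hf => hc ⟨i, Or.inr hf⟩
        simpa using hne
end

section
/- The space of 4-colourings of ℤ² is strongly 2-fillable. Concretely: let S = {0,1}² and let B = {(−1,0),(−1,1),(0,2),(1,2),(2,1),(2,0),(1,−1),(0,−1)} be the eight cells adjacent to S. For every function q : B → {0,1,2,3} there exists p : S → {0,1,2,3} such that p(c) ≠ p(c') for every pair of adjacent cells c, c' ∈ S, and p(c) ≠ q(b) for every c ∈ S and b ∈ B with c and b adjacent (two cells of ℤ² are adjacent if their ℓ¹ distance is 1). -/
/-- Two cells of `ℤ²` are adjacent if their `ℓ¹` distance is `1`. -/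
def Adjacent (p q : ℤ × ℤ) : Prop :=
  |p.1 - q.1| + |p.2 - q.2| = 1

/-- The 2×2 square `S = {0,1}²`. -/
def sqS : Set (ℤ × ℤ) := {(0, 0), (0, 1), (1, 0), (1, 1)}

/-- The eight cells bordering the square `S`. -/
def sqB : Set (ℤ × ℤ) :=
  {(-1, 0), (-1, 1), (0, 2), (1, 2), (2, 1), (2, 0), (1, -1), (0, -1)}

theorem exA3 : ∀ x b c : Fin 4, ∃ p : Fin 4, p ≠ x ∧ p ≠ b ∧ p ≠ c := by decide

theorem distinct4 : ∀ a h d e : Fin 4,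
    (¬ ∃ x : Fin 4, x ≠ a ∧ x ≠ h ∧ x ≠ d ∧ x ≠ e) →
    a ≠ d ∧ a ≠ e ∧ h ≠ d ∧ h ≠ e := by decide

set_option maxHeartbeats 4000000 in
set_option synthInstance.maxSize 3000 in
set_option synthInstance.maxHeartbeats 1000000 in
theorem lemmaB' : ∀ a h b c f g : Fin 4, a ≠ h →
    ∃ p1 p4 : Fin 4, p1 ≠ a ∧ p1 ≠ h ∧ (p4 = a ∨ p4 = h) ∧
      (∃ p2 : Fin 4, p2 ≠ b ∧ p2 ≠ c ∧ p2 ≠ p1 ∧ p2 ≠ p4) ∧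
      (∃ p3 : Fin 4, p3 ≠ f ∧ p3 ≠ g ∧ p3 ≠ p1 ∧ p3 ≠ p4) := by
  decide

/-- The combinatorial core: `p1=(0,0)` forbids `a,h`; `p2=(0,1)` forbids `b,c`;
`p3=(1,0)` forbids `f,g`; `p4=(1,1)` forbids `d,e`.  Edges: 12, 13, 24, 34. -/
theorem keyLemma (a b c d e f g h : Fin 4) :
    ∃ p1 p2 p3 p4 : Fin 4,
      p1 ≠ p2 ∧ p1 ≠ p3 ∧ p2 ≠ p4 ∧ p3 ≠ p4 ∧
      p1 ≠ a ∧ p1 ≠ h ∧ p2 ≠ b ∧ p2 ≠ c ∧ p3 ≠ f ∧ p3 ≠ g ∧ p4 ≠ d ∧ p4 ≠ e := by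
  by_cases hx : ∃ x : Fin 4, x ≠ a ∧ x ≠ h ∧ x ≠ d ∧ x ≠ e
  · obtain ⟨x, hxa, hxh, hxd, hxe⟩ := hx
    obtain ⟨p2, h2x, h2b, h2c⟩ := exA3 x b c
    obtain ⟨p3, h3x, h3f, h3g⟩ := exA3 x f g
    exact ⟨x, p2, p3, x, h2x.symm, h3x.symm, h2x, h3x, hxa, hxh, h2b, h2c, h3f, h3g, hxd, hxe⟩
  · obtain ⟨had, hae, hhd, hhe⟩ := distinct4 a h d e hx
    have hah : a ≠ h := by
      rintro rfl
      obtain ⟨x, hx1, hx2, hx3⟩ := exA3 a d e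
      exact hx ⟨x, hx1, hx1, hx2, hx3⟩
    obtain ⟨p1, p4, h1a, h1h, h4, ⟨p2, h2b, h2c, h21, h24⟩, ⟨p3, h3f, h3g, h31, h34⟩⟩ :=
      lemmaB' a h b c f g hah
    have h4d : p4 ≠ d := by rcases h4 with rfl | rfl <;> assumption
    have h4e : p4 ≠ e := by rcases h4 with rfl | rfl <;> assumption
    exact ⟨p1, p2, p3, p4, h21.symm, h31.symm, h24, h34, h1a, h1h, h2b, h2c, h3f, h3g, h4d, h4e⟩

/-- The space of 4-colourings of `ℤ²` is strongly 2-fillable: for every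
assignment `q` of colours to the eight cells bordering the 2×2 square `S`,
there is a colouring `p` of the cells of `S` such that adjacent cells of `S`
get different colours and each cell of `S` differs from every adjacent
border cell. -/
theorem stmt7 (q : ℤ × ℤ → Fin 4) :
    ∃ p : ℤ × ℤ → Fin 4,
      (∀ c ∈ sqS, ∀ c' ∈ sqS, Adjacent c c' → p c ≠ p c') ∧
      (∀ c ∈ sqS, ∀ b ∈ sqB, Adjacent c b → p c ≠ q b) := by
  obtain ⟨p1, p2, p3, p4, h12, h13, h24, h34, h1a, h1h, h2b, h2c, h3f, h3g, h4d, h4e⟩ :=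
    keyLemma (q (-1, 0)) (q (-1, 1)) (q (0, 2)) (q (1, 2)) (q (2, 1)) (q (2, 0)) (q (1, -1))
      (q (0, -1))
  refine ⟨fun z => if z.1 = 0 then (if z.2 = 0 then p1 else p2)
      else (if z.2 = 0 then p3 else p4), ?_, ?_⟩
  · intro c hc c' hc' hadj
    simp only [sqS, Set.mem_insert_iff, Set.mem_singleton_iff] at hc hc'
    rcases hc with rfl | rfl | rfl | rfl <;> rcases hc' with rfl | rfl | rfl | rfl <;>
      first
        | (exfalso; revert hadj; norm_num [Adjacent]; done)
        | (norm_num; first | assumption | (apply Ne.symm; assumption))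
  · intro c hc b hb hadj
    simp only [sqS, Set.mem_insert_iff, Set.mem_singleton_iff] at hc
    simp only [sqB, Set.mem_insert_iff, Set.mem_singleton_iff] at hb
    rcases hc with rfl | rfl | rfl | rfl <;>
      rcases hb with rfl | rfl | rfl | rfl | rfl | rfl | rfl | rfl <;>
      first
        | (exfalso; revert hadj; norm_num [Adjacent]; done)
        | (norm_num; assumption)
end

section
/- Let X ⊆ Σ^{ℤ^d} and Y ⊆ Γ^{ℤ^d} be SFTs and let Φ : X → Y be a topological isomorphism (a shift-commuting homeomorphism). Then there exist a finite alphabet Γ̂ ⊇ Γ and an injective, continuous, shift-commuting map Φ̂ : Σ^{ℤ^d} → Γ̂^{ℤ^d} such that Φ̂ restricted to X equals Φ. (One may take Γ̂ = Γ ∪ Σ ∪ (Γ × Σ), assuming Γ and Σ disjoint.) -/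
/-- The shift by `k ∈ ℤ^d` on configurations. -/
def shift {d : ℕ} {A : Type} (k : Fin d → ℤ) (x : (Fin d → ℤ) → A) :
    (Fin d → ℤ) → A :=
  fun i => x (k + i)

/-- `X ⊆ A^{ℤ^d}` is an SFT: it is determined by a finite window `U` and a set
`P` of allowed patterns on `U`. -/
def IsSFT {d : ℕ} {A : Type} (X : Set ((Fin d → ℤ) → A)) : Prop :=
  ∃ (U : Finset (Fin d → ℤ)) (P : Set ({u // u ∈ U} → A)),
    X = {x | ∀ i : Fin d → ℤ, (fun u : {u // u ∈ U} => x (i + u.val)) ∈ P}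

section Helpers

variable {d : ℕ} {A B : Type}

/-- The pattern of `x` at position `i` on window `U`. -/
def patt (U : Finset (Fin d → ℤ)) (x : (Fin d → ℤ) → A) (i : Fin d → ℤ) :
    {u // u ∈ U} → A :=
  fun u => x (i + u.val)

lemma patt_shift (U : Finset (Fin d → ℤ)) (k x i) :
    patt (A := A) U (shift k x) i = patt U x (k + i) := by
  funext u
  show x (k + (i + u.val)) = x (k + i + u.val)
  rw [add_assoc]

lemma patt_continuous [TopologicalSpace A] (U : Finset (Fin d → ℤ)) (i : Fin d → ℤ) :
    Continuous (fun x : (Fin d → ℤ) → A => patt U x i) :=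
  continuous_pi fun _ => continuous_apply _

open Classical in
/-- Local rule on patterns extracted (noncomputably) from `Φ`. -/
noncomputable def ruleAux (X : Set ((Fin d → ℤ) → A))
    (Φ : ((Fin d → ℤ) → A) → ((Fin d → ℤ) → B)) (W : Finset (Fin d → ℤ)) (b₀ : B)
    (p : {w // w ∈ W} → A) : B :=
  if h : ∃ x' ∈ X, ∀ w : {w // w ∈ W}, x' w.val = p w then Φ h.choose 0 else b₀

/-- The sliding-block extension of `Φ` to the full shift. -/
noncomputable def localExt (X : Set ((Fin d → ℤ) → A))
    (Φ : ((Fin d → ℤ) → A) → ((Fin d → ℤ) → B)) (W : Finset (Fin d → ℤ)) (b₀ : B)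
    (x : (Fin d → ℤ) → A) (i : Fin d → ℤ) : B :=
  ruleAux X Φ W b₀ (patt W x i)

lemma localExt_shift (X : Set ((Fin d → ℤ) → A)) (Φ W b₀) (k x i) :
    localExt (B := B) X Φ W b₀ (shift k x) i = localExt X Φ W b₀ x (k + i) := by
  unfold localExt
  rw [patt_shift]

lemma localExt_continuous [TopologicalSpace A] [DiscreteTopology A] [TopologicalSpace B]
    (X : Set ((Fin d → ℤ) → A)) (Φ W b₀) :
    Continuous (fun x => localExt (B := B) X Φ W b₀ x) := by
  refine continuous_pi fun i => ?_
  exact (continuous_of_discreteTopology (f := ruleAux X Φ W b₀)).comp (patt_continuous W i)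

lemma localExt_eq_on (X : Set ((Fin d → ℤ) → A))
    (Φ : ((Fin d → ℤ) → A) → ((Fin d → ℤ) → B)) (W : Finset (Fin d → ℤ)) (b₀ : B)
    (hinv : ∀ (k : Fin d → ℤ), ∀ x ∈ X, shift k x ∈ X)
    (hW : ∀ x ∈ X, ∀ y ∈ X, (∀ w ∈ W, x w = y w) → Φ x 0 = Φ y 0)
    (hshift : ∀ (k : Fin d → ℤ), ∀ x ∈ X, Φ (shift k x) = shift k (Φ x))
    (x : (Fin d → ℤ) → A) (hx : x ∈ X) (i : Fin d → ℤ) :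
    localExt X Φ W b₀ x i = Φ x i := by
  have hex : ∃ x' ∈ X, ∀ w : {w // w ∈ W}, x' w.val = patt W x i w :=
    ⟨shift i x, hinv i x hx, fun w => rfl⟩
  unfold localExt ruleAux
  rw [dif_pos hex]
  have h1 : Φ hex.choose 0 = Φ (shift i x) 0 :=
    hW _ hex.choose_spec.1 _ (hinv i x hx) (fun w hw => hex.choose_spec.2 ⟨w, hw⟩)
  rw [h1, hshift i x hx]
  show Φ x (i + 0) = Φ x i
  rw [add_zero]

/-- Window extraction: a map continuous on a compact set, into a discrete space,
only depends on finitely many coordinates. -/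
lemma window_lemma [Fintype A] [TopologicalSpace A] [DiscreteTopology A]
    [TopologicalSpace B] [DiscreteTopology B]
    (X : Set ((Fin d → ℤ) → A)) (hX : IsClosed X)
    (f : ((Fin d → ℤ) → A) → B) (hf : ContinuousOn f X) :
    ∃ W : Finset (Fin d → ℤ), ∀ x ∈ X, ∀ y ∈ X, (∀ w ∈ W, x w = y w) → f x = f y := by
  classical
  set K : Set (((Fin d → ℤ) → A) × ((Fin d → ℤ) → A)) :=
    (X ×ˢ X) ∩ (fun p => (f p.1, f p.2)) ⁻¹' {q : B × B | q.1 ≠ q.2} with hKdef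
  have hcont : ContinuousOn (fun p => (f p.1, f p.2)) (X ×ˢ X) := by
    refine ContinuousOn.prodMk ?_ ?_
    · exact hf.comp continuous_fst.continuousOn (fun p hp => hp.1)
    · exact hf.comp continuous_snd.continuousOn (fun p hp => hp.2)
  have hKcl : IsClosed K :=
    hcont.preimage_isClosed_of_isClosed (hX.prod hX) (isClosed_discrete _)
  have hKcomp : IsCompact K := hKcl.isCompact
  have hcover : K ⊆ ⋃ i : Fin d → ℤ, {p | p.1 i ≠ p.2 i} := by
    intro p hp
    by_contra hc
    simp only [Set.mem_iUnion, Set.mem_setOf_eq, not_exists, not_ne_iff] at hc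
    have heq : p.1 = p.2 := funext hc
    have h2 : f p.1 ≠ f p.2 := hp.2
    exact h2 (by rw [heq])
  have hopen : ∀ i : Fin d → ℤ, IsOpen {p : ((Fin d → ℤ) → A) × ((Fin d → ℤ) → A) | p.1 i ≠ p.2 i} := by
    intro i
    have : Continuous (fun p : ((Fin d → ℤ) → A) × ((Fin d → ℤ) → A) => (p.1 i, p.2 i)) :=
      ((continuous_apply i).comp continuous_fst).prodMk ((continuous_apply i).comp continuous_snd)
    exact (isOpen_discrete {q : A × A | q.1 ≠ q.2}).preimage this
  obtain ⟨W, hW⟩ := hKcomp.elim_finite_subcover _ hopen hcover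
  refine ⟨W, fun x hx y hy hxy => ?_⟩
  by_contra hne
  have hmem : (x, y) ∈ K := ⟨⟨hx, hy⟩, hne⟩
  have := hW hmem
  simp only [Set.mem_iUnion, Set.mem_setOf_eq] at this
  obtain ⟨i, hi, hne'⟩ := this
  exact hne' (hxy i hi)

lemma sft_valid_clopen [TopologicalSpace A] [DiscreteTopology A]
    (U : Finset (Fin d → ℤ)) (P : Set ({u // u ∈ U} → A)) (i : Fin d → ℤ) :
    IsClopen {x : (Fin d → ℤ) → A | patt U x i ∈ P} :=
  (isClopen_discrete P).preimage (patt_continuous U i)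

lemma sft_shift_mem {X : Set ((Fin d → ℤ) → A)} (hX : IsSFT X)
    (k : Fin d → ℤ) {x : (Fin d → ℤ) → A} (hx : x ∈ X) : shift k x ∈ X := by
  obtain ⟨U, P, hXP⟩ := hX
  rw [hXP] at hx ⊢
  intro i
  show patt U (shift k x) i ∈ P
  rw [patt_shift]
  exact hx (k + i)

lemma sft_closed [TopologicalSpace A] [DiscreteTopology A]
    {X : Set ((Fin d → ℤ) → A)} (hX : IsSFT X) : IsClosed X := by
  obtain ⟨U, P, hXP⟩ := hX
  have : X = ⋂ i : Fin d → ℤ, {x | patt U x i ∈ P} := by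
    rw [hXP]; ext x; simp only [Set.mem_iInter, Set.mem_setOf_eq]; exact Iff.rfl
  rw [this]
  exact isClosed_iInter fun i => (sft_valid_clopen U P i).isClosed

end Helpers

/-- Extension of a topological isomorphism of SFTs to an injective, continuous,
shift-commuting map of full shifts onto a larger alphabet: if `Φ : X → Y` is a
shift-commuting homeomorphism of SFTs (with inverse `Ψ`), then there is an
injective, continuous, shift-commuting map
`Φ̂ : A^{ℤ^d} → (B ⊕ (A ⊕ B × A))^{ℤ^d}` whose restriction to `X` is `Φ`
(composed with the inclusion `B ↪ B ⊕ (A ⊕ B × A)`). -/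
theorem stmt16 {d : ℕ} (hd : 1 ≤ d) {A B : Type} [Fintype A] [Fintype B]
    [TopologicalSpace A] [DiscreteTopology A]
    [TopologicalSpace B] [DiscreteTopology B]
    (X : Set ((Fin d → ℤ) → A)) (Y : Set ((Fin d → ℤ) → B))
    (hXsft : IsSFT X) (hYsft : IsSFT Y)
    (Φ : ((Fin d → ℤ) → A) → ((Fin d → ℤ) → B))
    (Ψ : ((Fin d → ℤ) → B) → ((Fin d → ℤ) → A))
    (hΦmaps : Set.MapsTo Φ X Y) (hΨmaps : Set.MapsTo Ψ Y X)
    (hΦcont : ContinuousOn Φ X) (hΨcont : ContinuousOn Ψ Y)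
    (hΦshift : ∀ (k : Fin d → ℤ), ∀ x ∈ X, Φ (shift k x) = shift k (Φ x))
    (hΨshift : ∀ (k : Fin d → ℤ), ∀ y ∈ Y, Ψ (shift k y) = shift k (Ψ y))
    (hinv₁ : ∀ x ∈ X, Ψ (Φ x) = x) (hinv₂ : ∀ y ∈ Y, Φ (Ψ y) = y) :
    ∃ Φh : ((Fin d → ℤ) → A) → ((Fin d → ℤ) → (B ⊕ (A ⊕ B × A))),
      Function.Injective Φh ∧
      Continuous Φh ∧
      (∀ (k : Fin d → ℤ) (x : (Fin d → ℤ) → A), Φh (shift k x) = shift k (Φh x)) ∧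
      (∀ x ∈ X, Φh x = fun i => Sum.inl (Φ x i)) := by
  classical
  rcases Set.eq_empty_or_nonempty X with hXe | ⟨x₀, hx₀⟩
  · -- X is empty: the trivial injective embedding works.
    refine ⟨fun x i => Sum.inr (Sum.inl (x i)), ?_, ?_, ?_, ?_⟩
    · intro x y h
      funext i
      have := congrFun h i
      simpa using this
    · exact continuous_pi fun i =>
        (continuous_inr.comp continuous_inl).comp (continuous_apply i)
    · intro k x; rfl
    · intro x hx; rw [hXe] at hx; exact absurd hx (Set.notMem_empty x)
  · -- Main case.
    obtain ⟨U, P, hXP⟩ := hXsft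
    have hXcl : IsClosed X := sft_closed ⟨U, P, hXP⟩
    have hYcl : IsClosed Y := sft_closed hYsft
    have hXshift : ∀ (k : Fin d → ℤ), ∀ x ∈ X, shift k x ∈ X :=
      fun k x hx => sft_shift_mem ⟨U, P, hXP⟩ k hx
    have hYshift : ∀ (k : Fin d → ℤ), ∀ y ∈ Y, shift k y ∈ Y :=
      fun k y hy => sft_shift_mem hYsft k hy
    obtain ⟨W, hW⟩ := window_lemma X hXcl (fun x => Φ x 0)
      ((continuous_apply (0 : Fin d → ℤ)).comp_continuousOn hΦcont)
    obtain ⟨V, hV⟩ := window_lemma Y hYcl (fun y => Ψ y 0)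
      ((continuous_apply (0 : Fin d → ℤ)).comp_continuousOn hΨcont)
    set b₀ : B := Φ x₀ 0 with hb₀
    set a₀ : A := x₀ 0 with ha₀
    set Φe := localExt X Φ W b₀ with hΦe
    set Ψe := localExt Y Ψ V a₀ with hΨe
    have hΦeEq : ∀ x ∈ X, ∀ i, Φe x i = Φ x i :=
      fun x hx i => localExt_eq_on X Φ W b₀ hXshift hW hΦshift x hx i
    have hΨeEq : ∀ y ∈ Y, ∀ i, Ψe y i = Ψ y i :=
      fun y hy i => localExt_eq_on Y Ψ V a₀ hYshift hV hΨshift y hy i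
    -- On `X`, `Ψe ∘ Φe` is the identity at coordinate 0.
    have hdec₀ : ∀ x ∈ X, Ψe (Φe x) 0 = x 0 := by
      intro x hx
      have h1 : Φe x = Φ x := funext fun i => hΦeEq x hx i
      rw [h1, hΨeEq (Φ x) (hΦmaps hx) 0]
      have := hinv₁ x hx
      rw [this]
    -- Compactness: a finite set of validity constraints forces correct decoding.
    set D : Set ((Fin d → ℤ) → A) := {x | Ψe (Φe x) 0 ≠ x 0} with hD
    have hDcl : IsClosed D := by
      have hc : Continuous (fun x => (Ψe (Φe x) 0, x 0)) := by
        refine Continuous.prodMk ?_ (continuous_apply _)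
        exact (continuous_apply (0 : Fin d → ℤ)).comp
          ((localExt_continuous Y Ψ V a₀).comp (localExt_continuous X Φ W b₀))
      exact (isClosed_discrete {q : A × A | q.1 ≠ q.2}).preimage hc
    have hDcomp : IsCompact D := hDcl.isCompact
    have hcover : D ⊆ ⋃ i : Fin d → ℤ, {x | patt U x i ∈ P}ᶜ := by
      intro x hx
      by_contra hc
      simp only [Set.mem_iUnion, Set.mem_compl_iff, Set.mem_setOf_eq, not_exists, not_not] at hc
      have hxX : x ∈ X := by rw [hXP]; intro i; exact hc i
      exact hx (hdec₀ x hxX)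
    obtain ⟨F, hF⟩ := hDcomp.elim_finite_subcover _
      (fun i => (sft_valid_clopen U P i).compl.isOpen) hcover
    have hdec : ∀ x, (∀ i ∈ F, patt U x i ∈ P) → Ψe (Φe x) 0 = x 0 := by
      intro x h
      by_contra hne
      have := hF hne
      simp only [Set.mem_iUnion, Set.mem_compl_iff, Set.mem_setOf_eq] at this
      obtain ⟨i, hi, hni⟩ := this
      exact hni (h i hi)
    -- The good set.
    set Good : ((Fin d → ℤ) → A) → (Fin d → ℤ) → Prop :=
      fun x i => ∀ j ∈ F, patt U x (i + j) ∈ P with hGood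
    have hGoodShift : ∀ k x i, Good (shift k x) i ↔ Good x (k + i) := by
      intro k x i
      constructor <;> intro h j hj
      · have := h j hj
        rw [patt_shift] at this
        rw [add_assoc]
        exact this
      · have := h j hj
        rw [patt_shift, ← add_assoc]
        exact this
    -- At a good site, the value of `x` can be decoded from `Φe x`.
    have hGoodDec : ∀ x i, Good x i → Ψe (Φe x) i = x i := by
      intro x i hg
      have h1 : ∀ j ∈ F, patt U (shift i x) j ∈ P := by
        intro j hj
        rw [patt_shift]
        exact hg j hj
      have h2 := hdec (shift i x) h1
      have h3 : Φe (shift i x) = shift i (Φe x) :=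
        funext fun j => localExt_shift X Φ W b₀ i x j
      rw [h3] at h2
      have h4 : Ψe (shift i (Φe x)) 0 = Ψe (Φe x) (i + 0) :=
        localExt_shift Y Ψ V a₀ i (Φe x) 0
      rw [h4] at h2
      rw [add_zero] at h2
      have h5 : shift i x 0 = x (i + 0) := rfl
      rw [h5, add_zero] at h2
      exact h2
    -- The extension.
    refine ⟨fun x i => if Good x i then Sum.inl (Φe x i)
        else Sum.inr (Sum.inr (Φe x i, x i)), ?_, ?_, ?_, ?_⟩
    · -- injectivity
      intro x y h
      have hkey : ∀ i, (Good x i ↔ Good y i) ∧ Φe x i = Φe y i ∧ (¬ Good x i → x i = y i) := by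
        intro i
        have hi : (if Good x i then Sum.inl (Φe x i) else Sum.inr (Sum.inr (Φe x i, x i)))
            = (if Good y i then Sum.inl (Φe y i)
              else Sum.inr (Sum.inr (Φe y i, y i)) : B ⊕ (A ⊕ B × A)) := congrFun h i
        by_cases hgx : Good x i <;> by_cases hgy : Good y i
        · rw [if_pos hgx, if_pos hgy] at hi
          exact ⟨by tauto, Sum.inl.inj hi, fun hc => absurd hgx hc⟩
        · rw [if_pos hgx, if_neg hgy] at hi; exact absurd hi (by simp)
        · rw [if_neg hgx, if_pos hgy] at hi; exact absurd hi (by simp)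
        · rw [if_neg hgx, if_neg hgy] at hi
          have := Sum.inr.inj (Sum.inr.inj hi)
          exact ⟨by tauto, congrArg Prod.fst this, fun _ => congrArg Prod.snd this⟩
      have hΦexy : Φe x = Φe y := funext fun i => (hkey i).2.1
      funext i
      by_cases hgx : Good x i
      · have hgy : Good y i := (hkey i).1.mp hgx
        rw [← hGoodDec x i hgx, ← hGoodDec y i hgy, hΦexy]
      · exact (hkey i).2.2 hgx
    · -- continuity
      refine continuous_pi fun i => ?_
      have hclopen : IsClopen {x | Good x i} := by
        have : {x | Good x i} = ⋂ j ∈ F, {x | patt U x (i + j) ∈ P} := by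
          ext x; simp [hGood, Set.mem_iInter]
        rw [this]
        exact isClopen_biInter_finset fun j _ => sft_valid_clopen U P (i + j)
      refine Continuous.if ?_ ?_ ?_
      · rw [hclopen.frontier_eq]; intro a ha; exact absurd ha (Set.notMem_empty a)
      · exact continuous_inl.comp ((continuous_apply i).comp (localExt_continuous X Φ W b₀))
      · refine (continuous_inr.comp continuous_inr).comp ?_
        exact Continuous.prodMk
          ((continuous_apply i).comp (localExt_continuous X Φ W b₀)) (continuous_apply i)
    · -- shift-commuting
      intro k x
      funext i
      show (if Good (shift k x) i then Sum.inl (Φe (shift k x) i)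
          else Sum.inr (Sum.inr (Φe (shift k x) i, shift k x i)))
        = (if Good x (k + i) then Sum.inl (Φe x (k + i))
          else Sum.inr (Sum.inr (Φe x (k + i), x (k + i))) : B ⊕ (A ⊕ B × A))
      by_cases hg : Good x (k + i)
      · rw [if_pos ((hGoodShift k x i).mpr hg), if_pos hg]
        exact congrArg Sum.inl (localExt_shift X Φ W b₀ k x i)
      · rw [if_neg (fun hc => hg ((hGoodShift k x i).mp hc)), if_neg hg]
        exact congrArg (fun q => Sum.inr (Sum.inr q))
          (Prod.ext (localExt_shift X Φ W b₀ k x i) rfl)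
    · -- restriction to X
      intro x hx
      funext i
      have hg : Good x i := by
        intro j hj
        have := hXP ▸ hx
        exact this (i + j)
      show (if Good x i then Sum.inl (Φe x i)
          else Sum.inr (Sum.inr (Φe x i, x i)) : B ⊕ (A ⊕ B × A)) = Sum.inl (Φ x i)
      rw [if_pos hg, hΦeEq x hx i]
end

section
/- Let F : Σ^{ℤ^d} → Σ^{ℤ^d} be a cellular automaton and X ⊆ Σ^{ℤ^d} an SFT. If F stabilises X from finite perturbations in linear time (i.e. in time τ(n) with τ(n) = O(n)), then F stabilises X from random perturbations: F(x) = x for all x ∈ X, and for every δ > 0 there exists ε > 0 such that for every x ∈ X and every ε-perturbation x̃ of x, there exists a random configuration y ∈ X on the same probability space with (attraction) F^t(x̃) → y almost surely in the product topology as t → ∞ (i.e. for each cell k, F^t(x̃)_k = y_k for all sufficiently large t), and (stability) P(y_k ≠ x_k) ≤ δ for each k ∈ ℤ^d. -/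
open MeasureTheory

/-- The diameter of a set `S ⊆ ℤ^d`: the least `m` with `S ⊆ i + [0,m)^d`. -/
noncomputable def diamd {d : ℕ} (S : Set (Fin d → ℤ)) : ℕ :=
  sInf {m : ℕ | ∃ i : Fin d → ℤ, ∀ a ∈ S, ∀ j, i j ≤ a j ∧ a j < i j + (m : ℤ)}

/-- `δ(y, X)`: the least diameter of a finite difference set between `y` and an
element of `X`. -/
noncomputable def pdist {d : ℕ} {A : Type} (X : Set ((Fin d → ℤ) → A))
    (y : (Fin d → ℤ) → A) : ℕ :=
  sInf {n : ℕ | ∃ x ∈ X, (diffSet x y).Finite ∧ diamd (diffSet x y) = n}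

/-!
The errors `E = {i | x̃ i ≠ x i}` are sorted into a hierarchy of islands. At level `k`, a
surviving error with no other survivor at distance in `(r k, D (k + 1)]` makes the survivors
within `r k` of it an island; islands are removed and the remaining errors survive to level
`k + 1`. A survivor of level `k` forces one of boundedly many sets of `2 ^ k` cells into `E`,
and with geometrically growing scales the count is at most `B ^ 2 ^ k`, so a cell survives to
level `k` with probability at most `(B ε) ^ 2 ^ k`.

Islands of one level are far apart, so linear-time stabilisation heals each of them, in
`healTime k` steps starting at time `σ k`, without interference: by induction the orbit of `x̃`
agrees at time `σ k`, away from the survivors of level `k`, with a configuration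
`background k ∈ X`. By Borel–Cantelli every cell is almost surely eventually out of reach of the
survivors, after which the orbit is constant there; the limit lies in `X` and differs from `x`
at a cell only if some survivor came near it, which has probability at most `2 B ε`.
-/

namespace RandomStabilisation

variable {d : ℕ} {A : Type}

/-- The `ℓ^∞` distance on `ℤ^d`, valued in `ℕ` so that `omega` can reason about it. -/
def supDist (a b : Fin d → ℤ) : ℕ := Finset.univ.sup fun j => (a j - b j).natAbs

lemma supDist_le_iff {a b : Fin d → ℤ} {R : ℕ} :
    supDist a b ≤ R ↔ ∀ j, (a j - b j).natAbs ≤ R := by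
  simp [supDist, Finset.sup_le_iff]

@[simp]
lemma supDist_self (a : Fin d → ℤ) : supDist a a = 0 := by
  simp [supDist]

lemma supDist_comm (a b : Fin d → ℤ) : supDist a b = supDist b a := by
  unfold supDist; congr 1; funext j; omega

lemma supDist_triangle (a b c : Fin d → ℤ) : supDist a c ≤ supDist a b + supDist b c := by
  rw [supDist_le_iff]
  intro j
  have hab : (a j - b j).natAbs ≤ supDist a b :=
    Finset.le_sup (f := fun j => (a j - b j).natAbs) (Finset.mem_univ j)
  have hbc : (b j - c j).natAbs ≤ supDist b c :=
    Finset.le_sup (f := fun j => (b j - c j).natAbs) (Finset.mem_univ j)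
  omega

lemma supDist_add_left (i n : Fin d → ℤ) : supDist (i + n) i = supDist n 0 := by
  simp [supDist]

noncomputable def box (i : Fin d → ℤ) (R : ℕ) : Finset (Fin d → ℤ) :=
  Finset.Icc (fun j => i j - R) (fun j => i j + R)

lemma mem_box {i a : Fin d → ℤ} {R : ℕ} : a ∈ box i R ↔ supDist a i ≤ R := by
  simp only [box, Finset.mem_Icc, supDist_le_iff, Pi.le_def, ← forall_and]
  exact forall_congr' fun j => by omega

lemma card_box (i : Fin d → ℤ) (R : ℕ) : (box i R).card = (2 * R + 1) ^ d := by
  rw [box, Pi.card_Icc]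
  have (j : Fin d) : (Finset.Icc (i j - R) (i j + R)).card = 2 * R + 1 := by
    rw [Int.card_Icc]; omega
  simp [this]

def nbhd (S : Set (Fin d → ℤ)) (R : ℕ) : Set (Fin d → ℤ) := {j | ∃ a ∈ S, supDist j a ≤ R}

lemma diamd_le_of_subset_box {S : Set (Fin d → ℤ)} {i : Fin d → ℤ} {R : ℕ}
    (h : ∀ a ∈ S, supDist a i ≤ R) : diamd S ≤ 2 * R + 1 := by
  apply Nat.sInf_le
  refine ⟨fun j => i j - R, fun a ha j => ?_⟩
  have := supDist_le_iff.mp (h a ha) j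
  push_cast
  omega

lemma pdist_le_of_diffSet_subset_box {X : Set ((Fin d → ℤ) → A)} {w y : (Fin d → ℤ) → A}
    {i : Fin d → ℤ} {R : ℕ} (hw : w ∈ X) (h : ∀ a ∈ diffSet w y, supDist a i ≤ R) :
    pdist X y ≤ 2 * R + 1 := by
  have hfin : (diffSet w y).Finite :=
    (box i R).finite_toSet.subset fun a ha => mem_box.mpr (h a ha)
  have hmem : diamd (diffSet w y) ∈
      {n | ∃ x ∈ X, (diffSet x y).Finite ∧ diamd (diffSet x y) = n} := ⟨w, hw, hfin, rfl⟩
  exact (Nat.sInf_le hmem).trans (diamd_le_of_subset_box h)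

/-- A map `F` of radius `ρ` fixing a set `X` that is determined by its `ρ`-balls, and
repairing every finite perturbation `y` of `X` within time `c * pdist X y + c`. -/
structure LinearStabiliser (d : ℕ) (A : Type) where
  X : Set ((Fin d → ℤ) → A)
  F : ((Fin d → ℤ) → A) → (Fin d → ℤ) → A
  c : ℕ
  ρ : ℕ
  F_congr : ∀ u v i, (∀ a, supDist a i ≤ ρ → u a = v a) → F u i = F v i
  mem_of_locally_mem : ∀ z, (∀ i, ∃ w ∈ X, ∀ a, supDist a i ≤ ρ → z a = w a) → z ∈ X
  F_fixed : ∀ y ∈ X, F y = y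
  stabilises : ∀ y, (∃ x ∈ X, (diffSet x y).Finite) → ∃ t ≤ c * pdist X y + c, F^[t] y ∈ X

lemma exists_supDist_zero_le (s : Finset (Fin d → ℤ)) : ∃ ρ, ∀ v ∈ s, supDist v 0 ≤ ρ :=
  ⟨s.sup (supDist · 0), fun _ hv => Finset.le_sup (f := (supDist · 0)) hv⟩

lemma cellularAutomaton_congr {N : Finset (Fin d → ℤ)} {f : ({n // n ∈ N} → A) → A}
    {F : ((Fin d → ℤ) → A) → (Fin d → ℤ) → A} (hF : ∀ x i, F x i = f fun n => x (i + n.val))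
    {ρ : ℕ} (hρ : ∀ n ∈ N, supDist n 0 ≤ ρ) (u v : (Fin d → ℤ) → A) (i : Fin d → ℤ)
    (h : ∀ a, supDist a i ≤ ρ → u a = v a) : F u i = F v i := by
  rw [hF, hF]
  congr 1
  funext n
  exact h _ ((supDist_add_left i n).trans_le (hρ n n.property))

lemma sft_mem_of_locally_mem {X : Set ((Fin d → ℤ) → A)} {U : Finset (Fin d → ℤ)}
    {P : Set ({u // u ∈ U} → A)}
    (hX : X = {x | ∀ i : Fin d → ℤ, (fun u : {u // u ∈ U} => x (i + u.val)) ∈ P})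
    {ρ : ℕ} (hρ : ∀ u ∈ U, supDist u 0 ≤ ρ) (z : (Fin d → ℤ) → A)
    (h : ∀ i, ∃ w ∈ X, ∀ a, supDist a i ≤ ρ → z a = w a) : z ∈ X := by
  subst hX
  intro i
  obtain ⟨w, hw, hzw⟩ := h i
  convert hw i using 1
  funext u
  exact hzw _ ((supDist_add_left i u).trans_le (hρ u u.property))

lemma exists_linearStabiliser {X : Set ((Fin d → ℤ) → A)} (hX : IsSFT X)
    {F : ((Fin d → ℤ) → A) → (Fin d → ℤ) → A}
    (hF : ∃ (N : Finset (Fin d → ℤ)) (f : ({n // n ∈ N} → A) → A),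
      ∀ x i, F x i = f (fun n => x (i + n.val)))
    {τ : ℕ → ℕ} {c : ℕ} (hτ : ∀ n, τ n ≤ c * n + c) (hfix : ∀ x ∈ X, F x = x)
    (hstab : ∀ y, (∃ x ∈ X, (diffSet x y).Finite) → ∃ t ≤ τ (pdist X y), F^[t] y ∈ X) :
    ∃ C : LinearStabiliser d A, C.X = X ∧ C.F = F := by
  obtain ⟨U, P, hXUP⟩ := hX
  obtain ⟨N, f, hf⟩ := hF
  obtain ⟨ρ, hρ⟩ := exists_supDist_zero_le (N ∪ U)
  refine ⟨⟨X, F, c, ρ,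
    cellularAutomaton_congr hf fun n hn => hρ n (Finset.mem_union_left _ hn),
    sft_mem_of_locally_mem hXUP fun u hu => hρ u (Finset.mem_union_right _ hu), hfix,
    fun y hy => ?_⟩, rfl, rfl⟩
  obtain ⟨t, ht, hty⟩ := hstab y hy
  exact ⟨t, ht.trans (hτ _), hty⟩

lemma exists_pos_ofReal_le (B : ℕ) {δ : ℝ} (hδ : 0 < δ) :
    ∃ ε : ℝ, 0 < ε ∧ B * ENNReal.ofReal ε ≤ 2⁻¹ ∧
      2 * (B * ENNReal.ofReal ε) ≤ ENNReal.ofReal δ := by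
  set m := min δ 1
  have hm : 0 < m := lt_min hδ one_pos
  have hBε : 2 * ((B : ℝ) * (m / (2 * B + 2))) ≤ m := by
    rw [mul_div_assoc', mul_div_assoc', div_le_iff₀ (by positivity)]
    nlinarith
  refine ⟨m / (2 * B + 2), by positivity, ?_, ?_⟩ <;>
    rw [← ENNReal.ofReal_natCast, ← ENNReal.ofReal_mul (Nat.cast_nonneg B)]
  · rw [← ENNReal.ofReal_ofNat 2, ← ENNReal.ofReal_inv_of_pos two_pos]
    exact ENNReal.ofReal_le_ofReal (by linarith [min_le_right δ 1])
  · rw [← ENNReal.ofReal_ofNat 2, ← ENNReal.ofReal_mul zero_le_two]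
    exact ENNReal.ofReal_le_ofReal (hBε.trans (min_le_left δ 1))

namespace LinearStabiliser

variable (C : LinearStabiliser d A)

lemma iterate_congr (t : ℕ) (u v : (Fin d → ℤ) → A) (i : Fin d → ℤ)
    (h : ∀ a, supDist a i ≤ C.ρ * t → u a = v a) : C.F^[t] u i = C.F^[t] v i := by
  induction t generalizing u v i with
  | zero => exact h i (by simp)
  | succ t ih =>
    rw [Function.iterate_succ_apply, Function.iterate_succ_apply]
    refine ih _ _ _ fun a ha => C.F_congr _ _ _ fun b hb => h b ?_
    calc supDist b i ≤ supDist b a + supDist a i := supDist_triangle _ _ _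
      _ ≤ C.ρ + C.ρ * t := Nat.add_le_add hb ha
      _ = C.ρ * (t + 1) := by ring

lemma iterate_add_apply_eq {s n : ℕ} {z c : (Fin d → ℤ) → A} {i : Fin d → ℤ}
    (h : ∀ j, supDist j i ≤ C.ρ * s → C.F^[n] z j = c j) :
    C.F^[s + n] z i = C.F^[s] c i := by
  rw [Function.iterate_add_apply]
  exact C.iterate_congr s _ _ i h

lemma iterate_fixed {y : (Fin d → ℤ) → A} (hy : y ∈ C.X) (t : ℕ) : C.F^[t] y = y :=
  Function.iterate_fixed (C.F_fixed y hy) t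

lemma iterate_mem_of_diffSet_subset_box {w y : (Fin d → ℤ) → A} {i : Fin d → ℤ} {R T : ℕ}
    (hw : w ∈ C.X) (h : ∀ a ∈ diffSet w y, supDist a i ≤ R)
    (hT : C.c * (2 * R + 1) + C.c ≤ T) : C.F^[T] y ∈ C.X := by
  have hfin : (diffSet w y).Finite :=
    (box i R).finite_toSet.subset fun a ha => mem_box.mpr (h a ha)
  obtain ⟨t, ht, hty⟩ := C.stabilises y ⟨w, hw, hfin⟩
  have hpd := Nat.mul_le_mul_left C.c (pdist_le_of_diffSet_subset_box hw h)
  rw [show T = (T - t) + t by omega, Function.iterate_add_apply, C.iterate_fixed hty]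
  exact hty

/-- `D (k + 1) ≤ growth * D k` and `D 0 > 2 * growth ^ 2`: the scales grow geometrically
and start large enough that `(2 D (k+2) + 1)^2 ≤ (2 D (k+1) + 1)^3`. -/
def growth : ℕ := 8 * (C.ρ + 1) * ((C.c + 1) * (2 * C.ρ + 13) + 6)

/-- `scales k = (σ k, D k)`. An island of level `k` is the set of level-`k` survivors within
`r k = 4 D k + 1` of a survivor that has no survivor at distance in `(r k, D (k + 1)]`; the
islands of level `k` are healed during the `healTime k` steps after time `σ k`. -/
def scales : ℕ → ℕ × ℕ
  | 0 => (0, 2 * C.growth ^ 2 + 1)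
  | k + 1 =>
    let r := 4 * (scales k).2 + 1
    let t := C.c * (2 * (r + C.ρ * (scales k).1) + 1) + C.c + 1
    ((scales k).1 + t, 8 * (C.ρ + 1) * ((scales k).1 + t + r + 1))

def σ (k : ℕ) : ℕ := (C.scales k).1

def D (k : ℕ) : ℕ := (C.scales k).2

def r (k : ℕ) : ℕ := 4 * C.D k + 1

def healTime (k : ℕ) : ℕ := C.c * (2 * (C.r k + C.ρ * C.σ k) + 1) + C.c + 1

lemma σ_zero : C.σ 0 = 0 := rfl

lemma σ_succ (k : ℕ) : C.σ (k + 1) = C.σ k + C.healTime k := rfl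

lemma D_succ (k : ℕ) : C.D (k + 1) = 8 * (C.ρ + 1) * (C.σ (k + 1) + C.r k + 1) := rfl

lemma ρ_mul_σ_succ (k : ℕ) : C.ρ * C.σ (k + 1) = C.ρ * C.σ k + C.ρ * C.healTime k := by
  rw [σ_succ, Nat.mul_add]

lemma σ_strictMono : StrictMono C.σ :=
  strictMono_nat_of_lt_succ fun k => by rw [σ_succ, healTime]; omega

lemma le_σ (k : ℕ) : k ≤ C.σ k := C.σ_strictMono.le_apply

lemma exists_σ_le_lt {K t : ℕ} (ht : C.σ K ≤ t) :
    ∃ k, K ≤ k ∧ C.σ k ≤ t ∧ t < C.σ (k + 1) := by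
  classical
  have hKt : K ≤ t := (C.le_σ K).trans ht
  refine ⟨Nat.findGreatest (fun k => C.σ k ≤ t) t,
    Nat.le_findGreatest (P := fun k => C.σ k ≤ t) hKt ht,
    Nat.findGreatest_spec (P := fun k => C.σ k ≤ t) hKt ht, ?_⟩
  by_contra! hnext
  by_cases hk : Nat.findGreatest (fun k => C.σ k ≤ t) t + 1 ≤ t
  · exact Nat.findGreatest_is_greatest (Nat.lt_succ_self _) hk hnext
  · have := C.le_σ (Nat.findGreatest (fun k => C.σ k ≤ t) t + 1)
    omega

lemma D_pos (k : ℕ) : 0 < C.D k := by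
  cases k with
  | zero => exact Nat.succ_pos _
  | succ k => rw [D_succ]; positivity

lemma two_mul_D_le_D_succ (k : ℕ) : 2 * C.D k ≤ C.D (k + 1) := by
  rw [D_succ, r]; nlinarith

lemma two_mul_growth_sq_lt_D (k : ℕ) : 2 * C.growth ^ 2 < C.D k := by
  induction k with
  | zero => exact Nat.lt_succ_self _
  | succ k ih => have := C.two_mul_D_le_D_succ k; omega

lemma σ_le_D (k : ℕ) : C.σ k ≤ C.D k := by
  cases k with
  | zero => exact Nat.zero_le _
  | succ k => rw [D_succ]; nlinarith

lemma D_succ_le_growth_mul (k : ℕ) : C.D (k + 1) ≤ C.growth * C.D k := by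
  have hσ := C.σ_le_D k
  have hD : 1 ≤ C.D k := C.D_pos k
  have hρσ := Nat.mul_le_mul_left C.ρ hσ
  have hcρσ := Nat.mul_le_mul_left C.c hρσ
  have hcD := Nat.mul_le_mul_left C.c hD
  rw [D_succ, σ_succ, growth, mul_assoc (8 * (C.ρ + 1))]
  apply Nat.mul_le_mul_left
  simp only [healTime, r]
  nlinarith

/-- The separation that makes islands of the same level, together with the regions their
healing affects, pairwise disjoint. -/
lemma isolation_le_D_succ (k : ℕ) :
    3 * C.r k + 2 * (C.ρ * C.σ (k + 1)) + 2 * C.ρ ≤ C.D (k + 1) := by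
  rw [D_succ]; nlinarith

lemma ρ_mul_σ_le_D (k : ℕ) : C.ρ * C.σ k ≤ C.D k := by
  cases k with
  | zero => simp [σ_zero]
  | succ k => rw [D_succ]; nlinarith

lemma sq_box_le_cube (k : ℕ) : (2 * C.D (k + 1) + 1) ^ 2 ≤ (2 * C.D k + 1) ^ 3 := by
  have h1 := C.D_succ_le_growth_mul k
  have h2 : 9 * C.growth ^ 2 ≤ 8 * C.D k := by linarith [C.two_mul_growth_sq_lt_D k]
  calc (2 * C.D (k + 1) + 1) ^ 2 ≤ (3 * (C.growth * C.D k)) ^ 2 := by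
        apply Nat.pow_le_pow_left
        nlinarith [C.D_pos (k + 1)]
    _ = 9 * C.growth ^ 2 * C.D k ^ 2 := by ring
    _ ≤ 8 * C.D k * C.D k ^ 2 := Nat.mul_le_mul_right _ h2
    _ ≤ (2 * C.D k + 1) ^ 3 := by nlinarith

def witnessBound : ℕ → ℕ
  | 0 => 1
  | k + 1 => (2 * C.D (k + 1) + 1) ^ d * witnessBound k ^ 2

def countBase : ℕ := (2 * C.D 1 + 1) ^ (2 * d)

lemma box_sq_mul_witnessBound_le (k : ℕ) :
    (2 * C.D (k + 1) + 1) ^ (2 * d) * C.witnessBound k ≤ C.countBase ^ 2 ^ k := by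
  induction k with
  | zero => simp [witnessBound, countBase]
  | succ k ih =>
    set b := (2 * C.D (k + 1) + 1) ^ d
    have hcube : (2 * C.D (k + 2) + 1) ^ (2 * d) ≤ b ^ 3 :=
      calc (2 * C.D (k + 2) + 1) ^ (2 * d) = ((2 * C.D (k + 2) + 1) ^ 2) ^ d := pow_mul _ _ _
        _ ≤ ((2 * C.D (k + 1) + 1) ^ 3) ^ d := Nat.pow_le_pow_left (C.sq_box_le_cube (k + 1)) d
        _ = b ^ 3 := by rw [← pow_mul, ← pow_mul, mul_comm 3 d]
    calc (2 * C.D (k + 2) + 1) ^ (2 * d) * (b * C.witnessBound k ^ 2)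
        ≤ b ^ 3 * (b * C.witnessBound k ^ 2) := Nat.mul_le_mul_right _ hcube
      _ = (b ^ 2 * C.witnessBound k) ^ 2 := by ring
      _ ≤ (C.countBase ^ 2 ^ k) ^ 2 := by
          apply Nat.pow_le_pow_left
          rwa [← pow_mul, mul_comm d 2]
      _ = C.countBase ^ 2 ^ (k + 1) := by rw [← pow_mul, pow_succ]

lemma card_box_mul_witnessBound_le (i : Fin d → ℤ) (k : ℕ) :
    (box i (C.ρ * C.σ (k + 1))).card * C.witnessBound k ≤ C.countBase ^ 2 ^ k := by
  refine le_trans (Nat.mul_le_mul_right _ ?_) (C.box_sq_mul_witnessBound_le k)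
  rw [card_box, pow_mul']
  calc (2 * (C.ρ * C.σ (k + 1)) + 1) ^ d ≤ (2 * C.D (k + 1) + 1) ^ d :=
        Nat.pow_le_pow_left (by have := C.ρ_mul_σ_le_D (k + 1); omega) d
    _ ≤ ((2 * C.D (k + 1) + 1) ^ d) ^ 2 := Nat.le_self_pow two_ne_zero _

def islandsOf (S : Set (Fin d → ℤ)) (k : ℕ) : Set (Set (Fin d → ℤ)) :=
  {I | ∃ i ∈ S, (∀ j ∈ S, supDist j i ≤ C.D (k + 1) → supDist j i ≤ C.r k) ∧
    I = {j | j ∈ S ∧ supDist j i ≤ C.r k}}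

section Islands

variable {C} {S I I' : Set (Fin d → ℤ)} {k : ℕ}

lemma subset_of_mem_islandsOf (hI : I ∈ C.islandsOf S k) : I ⊆ S := by
  obtain ⟨i, -, -, rfl⟩ := hI
  exact fun j hj => hj.1

lemma exists_centre_of_mem_islandsOf (hI : I ∈ C.islandsOf S k) :
    ∃ i, ∀ a ∈ I, supDist a i ≤ C.r k := by
  obtain ⟨i, -, -, rfl⟩ := hI
  exact ⟨i, fun a ha => ha.2⟩

lemma eq_of_mem_islandsOf (hI : I ∈ C.islandsOf S k) (hI' : I' ∈ C.islandsOf S k)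
    {a a' : Fin d → ℤ} (ha : a ∈ I) (ha' : a' ∈ I')
    (hd : supDist a a' ≤ 2 * (C.ρ * C.σ (k + 1)) + 2 * C.ρ) : I = I' := by
  obtain ⟨i, -, hi, rfl⟩ := hI
  obtain ⟨i', -, hi', rfl⟩ := hI'
  have hsep := C.isolation_le_D_succ k
  have h₁ := supDist_triangle i a i'
  have h₂ := supDist_triangle a a' i'
  have h₃ := supDist_comm i a
  have h₄ := ha.2
  have h₅ := ha'.2
  have h₆ := supDist_comm i i'
  ext j
  constructor
  · rintro ⟨hj, hji⟩
    have := supDist_triangle j i i'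
    exact ⟨hj, hi' j hj (by omega)⟩
  · rintro ⟨hj, hji'⟩
    have := supDist_triangle j i' i
    exact ⟨hj, hi j hj (by omega)⟩

lemma exists_far_of_not_mem_islandsOf {i : Fin d → ℤ} (hi : i ∈ S)
    (hno : ∀ I ∈ C.islandsOf S k, i ∉ I) :
    ∃ j ∈ S, C.r k < supDist j i ∧ supDist j i ≤ C.D (k + 1) := by
  by_contra! hc
  refine hno _ ⟨i, hi, fun j hj hjD => ?_, rfl⟩ ⟨hi, by simp⟩
  have := hc j hj
  omega

end Islands

section Survivors

variable (E : Set (Fin d → ℤ))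

def survivors : ℕ → Set (Fin d → ℤ)
  | 0 => E
  | k + 1 => survivors k \ ⋃₀ C.islandsOf (survivors k) k

abbrev islands (k : ℕ) : Set (Set (Fin d → ℤ)) := C.islandsOf (C.survivors E k) k

variable {C E}

lemma mem_survivors_succ {i : Fin d → ℤ} {k : ℕ} :
    i ∈ C.survivors E (k + 1) ↔ i ∈ C.survivors E k ∧ ∀ I ∈ C.islands E k, i ∉ I := by
  simp [survivors, islands]

variable (C)

noncomputable def witnesses : ℕ → (Fin d → ℤ) → Finset (Finset (Fin d → ℤ))
  | 0, i => {{i}}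
  | k + 1, i => ((box i (C.D (k + 1))).filter fun j => C.r k < supDist j i).biUnion
      fun j => (witnesses k i).biUnion fun W₁ => (witnesses k j).image (W₁ ∪ ·)

lemma witnesses_spec {k : ℕ} {i : Fin d → ℤ} :
    ∀ W ∈ C.witnesses k i, W.card = 2 ^ k ∧ ∀ a ∈ W, supDist a i ≤ 2 * C.D k := by
  induction k generalizing i with
  | zero =>
    intro W hW
    simp only [witnesses, Finset.mem_singleton] at hW
    subst hW
    simp
  | succ k ih =>
    intro W hW
    simp only [witnesses, Finset.mem_biUnion, Finset.mem_filter, Finset.mem_image] at hW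
    obtain ⟨j, ⟨hjD, hjr⟩, W₁, hW₁, W₂, hW₂, rfl⟩ := hW
    have hjD := mem_box.mp hjD
    obtain ⟨hc₁, hd₁⟩ := ih W₁ hW₁
    obtain ⟨hc₂, hd₂⟩ := ih W₂ hW₂
    have hD := C.two_mul_D_le_D_succ k
    have hdisj : Disjoint W₁ W₂ := by
      refine Finset.disjoint_left.mpr fun a ha₁ ha₂ => ?_
      have h₁ := hd₁ a ha₁
      have h₂ := hd₂ a ha₂
      have := supDist_triangle j a i
      have := supDist_comm j a
      have : C.r k = 4 * C.D k + 1 := rfl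
      omega
    refine ⟨by rw [Finset.card_union_of_disjoint hdisj, hc₁, hc₂, pow_succ, mul_two], ?_⟩
    intro a ha
    rcases Finset.mem_union.mp ha with ha | ha
    · have := hd₁ a ha
      omega
    · have := hd₂ a ha
      have := supDist_triangle a j i
      omega

lemma card_witnesses_le (k : ℕ) (i : Fin d → ℤ) :
    (C.witnesses k i).card ≤ C.witnessBound k := by
  induction k generalizing i with
  | zero => simp [witnesses, witnessBound]
  | succ k ih =>
    have hpairs (j : Fin d → ℤ) :
        ((C.witnesses k i).biUnion fun W₁ => (C.witnesses k j).image (W₁ ∪ ·)).card ≤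
          C.witnessBound k ^ 2 := by
      refine (Finset.card_biUnion_le_card_mul _ _ _ fun W₁ _ =>
        Finset.card_image_le.trans (ih j)).trans ?_
      rw [sq]
      exact Nat.mul_le_mul_right _ (ih i)
    refine (Finset.card_biUnion_le_card_mul _ _ _ fun j _ => hpairs j).trans ?_
    refine Nat.mul_le_mul_right _ ((Finset.card_filter_le _ _).trans ?_)
    rw [card_box]

lemma exists_witness_subset {k : ℕ} {i : Fin d → ℤ} (hi : i ∈ C.survivors E k) :
    ∃ W ∈ C.witnesses k i, ↑W ⊆ E := by
  induction k generalizing i with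
  | zero => exact ⟨{i}, by simp [witnesses], by simpa [survivors] using hi⟩
  | succ k ih =>
    obtain ⟨hik, hno⟩ := mem_survivors_succ.mp hi
    obtain ⟨j, hj, hjr, hjD⟩ := exists_far_of_not_mem_islandsOf hik hno
    obtain ⟨W₁, hW₁, hW₁E⟩ := ih hik
    obtain ⟨W₂, hW₂, hW₂E⟩ := ih hj
    refine ⟨W₁ ∪ W₂, ?_, by simpa using And.intro hW₁E hW₂E⟩
    simp only [witnesses, Finset.mem_biUnion, Finset.mem_filter, Finset.mem_image]
    exact ⟨j, ⟨mem_box.mpr hjD, hjr⟩, W₁, hW₁, W₂, hW₂, rfl⟩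

end Survivors

section Background

open Classical in
noncomputable def splice (z : (Fin d → ℤ) → A) (k : ℕ) (c : (Fin d → ℤ) → A)
    (I : Set (Fin d → ℤ)) : (Fin d → ℤ) → A :=
  fun j => if j ∈ nbhd I (C.ρ * C.σ k) then C.F^[C.σ k] z j else c j

open Classical in
/-- The element of `X` that `F^[σ k] z` agrees with far from the survivors of level `k`:
near each island `I` of level `k`, the next one runs `F` for `healTime k` steps on the
splice of `F^[σ k] z` around `I` into the current one. -/
noncomputable def background (x z : (Fin d → ℤ) → A) : ℕ → (Fin d → ℤ) → A
  | 0 => x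
  | k + 1 => fun i =>
      if h : ∃ I ∈ C.islands (diffSet x z) k, i ∈ nbhd I (C.ρ * C.σ (k + 1)) then
        C.F^[C.healTime k] (C.splice z k (background x z k) h.choose) i
      else background x z k i

variable (x z : (Fin d → ℤ) → A)

noncomputable def healed (k : ℕ) (I : Set (Fin d → ℤ)) : (Fin d → ℤ) → A :=
  C.F^[C.healTime k] (C.splice z k (C.background x z k) I)

variable {C x z} {k : ℕ} {I : Set (Fin d → ℤ)} {i : Fin d → ℤ}

lemma splice_of_not_mem {c : (Fin d → ℤ) → A} {j : Fin d → ℤ}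
    (hj : j ∉ nbhd I (C.ρ * C.σ k)) : C.splice z k c I j = c j := by
  simp [splice, hj]

lemma healed_mem (hI : I ∈ C.islands (diffSet x z) k) (hc : C.background x z k ∈ C.X) :
    C.healed x z k I ∈ C.X := by
  obtain ⟨i₀, hi₀⟩ := exists_centre_of_mem_islandsOf hI
  refine C.iterate_mem_of_diffSet_subset_box hc (i := i₀) (R := C.r k + C.ρ * C.σ k)
    (fun j hj => ?_) (by simp only [healTime]; omega)
  by_cases hjI : j ∈ nbhd I (C.ρ * C.σ k)
  · obtain ⟨a, ha, hja⟩ := hjI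
    have := hi₀ a ha
    have := supDist_triangle j a i₀
    omega
  · exact absurd (splice_of_not_mem hjI).symm hj

lemma healed_eq_of_not_mem_nbhd (hc : C.background x z k ∈ C.X)
    (hi : i ∉ nbhd I (C.ρ * C.σ (k + 1))) : C.healed x z k I i = C.background x z k i := by
  rw [healed, C.iterate_congr _ _ (C.background x z k), C.iterate_fixed hc]
  refine fun a ha => splice_of_not_mem fun ⟨b, hb, hab⟩ => hi ⟨b, hb, ?_⟩
  have := supDist_triangle i a b
  have := supDist_comm i a
  have := C.ρ_mul_σ_succ k
  omega

lemma background_succ_of_mem_nbhd (hI : I ∈ C.islands (diffSet x z) k)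
    (hi : i ∈ nbhd I (C.ρ * C.σ (k + 1))) :
    C.background x z (k + 1) i = C.healed x z k I i := by
  have h : ∃ I ∈ C.islands (diffSet x z) k, i ∈ nbhd I (C.ρ * C.σ (k + 1)) := ⟨I, hI, hi⟩
  have hch : h.choose = I := by
    obtain ⟨hI', b, hb, hib⟩ := h.choose_spec
    obtain ⟨a, ha, hia⟩ := hi
    refine eq_of_mem_islandsOf hI' hI hb ha ?_
    have := supDist_triangle b i a
    have := supDist_comm b i
    omega
  simp only [background, dif_pos h, hch, healed]

lemma background_succ_of_not_mem_nbhd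
    (hi : ∀ I ∈ C.islands (diffSet x z) k, i ∉ nbhd I (C.ρ * C.σ (k + 1))) :
    C.background x z (k + 1) i = C.background x z k i := by
  have h : ¬ ∃ I ∈ C.islands (diffSet x z) k, i ∈ nbhd I (C.ρ * C.σ (k + 1)) :=
    fun ⟨I, hI, hiI⟩ => hi I hI hiI
  simp only [background, dif_neg h]

/-- Near an island `I`, the next background agrees with the healed copy of `I`, which lies in
`X`; elsewhere it agrees with the current background. The separation of islands ensures
that every `ρ`-ball sees at most one island. -/
lemma background_mem (hx : x ∈ C.X) (k : ℕ) : C.background x z k ∈ C.X := by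
  induction k with
  | zero => exact hx
  | succ k ih =>
    refine C.mem_of_locally_mem _ fun m => ?_
    by_cases hm : ∃ I ∈ C.islands (diffSet x z) k, ∃ a ∈ I,
        supDist m a ≤ C.ρ * C.σ (k + 1) + C.ρ
    · obtain ⟨I, hI, a, ha, hma⟩ := hm
      refine ⟨C.healed x z k I, healed_mem hI ih, fun j hj => ?_⟩
      by_cases hjI : j ∈ nbhd I (C.ρ * C.σ (k + 1))
      · exact background_succ_of_mem_nbhd hI hjI
      rw [healed_eq_of_not_mem_nbhd ih hjI]
      refine background_succ_of_not_mem_nbhd fun I' hI' hjI' => ?_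
      obtain ⟨b, hb, hjb⟩ := hjI'
      have hII' : I' = I := by
        refine eq_of_mem_islandsOf hI' hI hb ha ?_
        have := supDist_triangle b j a
        have := supDist_triangle j m a
        have := supDist_comm b j
        omega
      exact hjI (hII' ▸ ⟨b, hb, hjb⟩)
    · push Not at hm
      refine ⟨C.background x z k, ih, fun j hj => background_succ_of_not_mem_nbhd ?_⟩
      rintro I hI ⟨a, ha, hja⟩
      have := hm I hI a ha
      have := supDist_triangle m j a
      have := supDist_comm m j
      omega

lemma exists_island_of_background_ne (h : C.background x z k i ≠ x i) :
    ∃ l < k, ∃ I ∈ C.islands (diffSet x z) l, i ∈ nbhd I (C.ρ * C.σ (l + 1)) := by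
  induction k with
  | zero => exact absurd rfl h
  | succ k ih =>
    by_cases hi : ∃ I ∈ C.islands (diffSet x z) k, i ∈ nbhd I (C.ρ * C.σ (k + 1))
    · exact ⟨k, Nat.lt_succ_self k, hi⟩
    · push Not at hi
      obtain ⟨l, hl, hI⟩ := ih (background_succ_of_not_mem_nbhd hi ▸ h)
      exact ⟨l, by omega, hI⟩

lemma mem_survivors_succ_or_exists_island {a : Fin d → ℤ}
    (ha : a ∈ C.survivors (diffSet x z) k) :
    a ∈ C.survivors (diffSet x z) (k + 1) ∨ ∃ I ∈ C.islands (diffSet x z) k, a ∈ I := by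
  by_cases h : ∃ I ∈ C.islands (diffSet x z) k, a ∈ I
  · exact Or.inr h
  · push Not at h
    exact Or.inl (mem_survivors_succ.mpr ⟨ha, h⟩)

end Background

section Limit

variable {C} {x z : (Fin d → ℤ) → A} {k : ℕ} {i : Fin d → ℤ}

/-- A survivor of level `k` near a cell `j` close to `i` is either a survivor of level `k + 1`,
hence far from `i`, or lies on a level-`k` island, which is `I` or far from `i`. -/
lemma iterate_σ_succ_eq_of_mem_nbhd
    (ih : ∀ j, (∀ a ∈ C.survivors (diffSet x z) k, C.ρ * C.σ k < supDist j a) →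
      C.F^[C.σ k] z j = C.background x z k j)
    (hi : ∀ a ∈ C.survivors (diffSet x z) (k + 1), C.ρ * C.σ (k + 1) < supDist i a)
    {I : Set (Fin d → ℤ)} (hI : I ∈ C.islands (diffSet x z) k)
    (hiI : i ∈ nbhd I (C.ρ * C.σ (k + 1))) :
    C.F^[C.σ (k + 1)] z i = C.background x z (k + 1) i := by
  rw [background_succ_of_mem_nbhd hI hiI, healed, σ_succ, add_comm]
  refine C.iterate_add_apply_eq fun j hji => ?_
  by_cases hjI : j ∈ nbhd I (C.ρ * C.σ k)
  · simp [splice, hjI]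
  rw [splice_of_not_mem hjI]
  refine ih j fun a ha => ?_
  have hσ := C.ρ_mul_σ_succ k
  have := supDist_triangle i j a
  have := supDist_comm i j
  rcases mem_survivors_succ_or_exists_island ha with ha | ⟨I', hI', haI'⟩
  · have := hi a ha
    omega
  · obtain rfl | hII' := eq_or_ne I' I
    · by_contra! hja
      exact hjI ⟨a, haI', hja⟩
    · by_contra! hja
      obtain ⟨b, hb, hib⟩ := hiI
      refine hII' (eq_of_mem_islandsOf hI' hI haI' hb ?_)
      have := supDist_triangle a i b
      have := supDist_comm a i
      omega

lemma iterate_σ_succ_eq_of_not_mem_nbhd (hx : x ∈ C.X)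
    (ih : ∀ j, (∀ a ∈ C.survivors (diffSet x z) k, C.ρ * C.σ k < supDist j a) →
      C.F^[C.σ k] z j = C.background x z k j)
    (hi : ∀ a ∈ C.survivors (diffSet x z) (k + 1), C.ρ * C.σ (k + 1) < supDist i a)
    (hfar : ∀ I ∈ C.islands (diffSet x z) k, i ∉ nbhd I (C.ρ * C.σ (k + 1))) :
    C.F^[C.σ (k + 1)] z i = C.background x z (k + 1) i := by
  rw [background_succ_of_not_mem_nbhd hfar, σ_succ, add_comm,
    ← C.iterate_fixed (background_mem hx k) (C.healTime k)]
  refine C.iterate_add_apply_eq fun j hji => ih j fun a ha => ?_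
  have hσ := C.ρ_mul_σ_succ k
  have := supDist_triangle i j a
  have := supDist_comm i j
  rcases mem_survivors_succ_or_exists_island ha with ha | ⟨I, hI, haI⟩
  · have := hi a ha
    omega
  · by_contra! hja
    exact hfar I hI ⟨a, haI, by omega⟩

lemma iterate_σ_eq_background (hx : x ∈ C.X) (k : ℕ)
    (hi : ∀ a ∈ C.survivors (diffSet x z) k, C.ρ * C.σ k < supDist i a) :
    C.F^[C.σ k] z i = C.background x z k i := by
  induction k generalizing i with
  | zero =>
    by_contra h
    simpa using hi i (Ne.symm h)
  | succ k ih =>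
    by_cases hnear : ∃ I ∈ C.islands (diffSet x z) k, i ∈ nbhd I (C.ρ * C.σ (k + 1))
    · obtain ⟨I, hI, hiI⟩ := hnear
      exact iterate_σ_succ_eq_of_mem_nbhd (fun j => @ih j) hi hI hiI
    · push Not at hnear
      exact iterate_σ_succ_eq_of_not_mem_nbhd hx (fun j => @ih j) hi hnear

variable (C)

/-- `ρ * σ (l + 1)` is how far the survivors of level `l` can influence the orbit before their
islands are healed. -/
def SurvivorFree (E : Set (Fin d → ℤ)) (l : ℕ) (i : Fin d → ℤ) : Prop :=
  ∀ j ∈ C.survivors E l, C.ρ * C.σ (l + 1) < supDist j i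

def IsSparse (E : Set (Fin d → ℤ)) : Prop :=
  ∀ i, ∀ᶠ l in Filter.atTop, C.SurvivorFree E l i

variable {C}

lemma background_eq_of_survivorFree {K : ℕ}
    (hK : ∀ l ≥ K, C.SurvivorFree (diffSet x z) l i) (hk : K ≤ k) :
    C.background x z k i = C.background x z K i := by
  induction k, hk using Nat.le_induction with
  | base => rfl
  | succ k hk ih =>
    rw [← ih, background_succ_of_not_mem_nbhd]
    rintro I hI ⟨a, ha, hia⟩
    have := hK k hk a (subset_of_mem_islandsOf hI ha)
    have := supDist_comm i a
    omega

lemma iterate_eq_background_of_survivorFree (hx : x ∈ C.X) {K t : ℕ}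
    (hK : ∀ l ≥ K, C.SurvivorFree (diffSet x z) l i) (ht : C.σ K ≤ t) :
    C.F^[t] z i = C.background x z K i := by
  obtain ⟨k, hKk, hkt, htk⟩ := C.exists_σ_le_lt ht
  have hs : t - C.σ k ≤ C.healTime k := by rw [σ_succ] at htk; omega
  have hρs := Nat.mul_le_mul_left C.ρ hs
  rw [← Nat.sub_add_cancel hkt, ← background_eq_of_survivorFree hK hKk,
    ← C.iterate_fixed (background_mem hx k) (t - C.σ k)]
  refine C.iterate_add_apply_eq fun j hji => iterate_σ_eq_background hx k fun a ha => ?_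
  have := hK k hKk a ha
  have := C.ρ_mul_σ_succ k
  have := supDist_triangle a j i
  have := supDist_comm a j
  omega

variable (C x z) in
noncomputable def limit (hE : C.IsSparse (diffSet x z)) : (Fin d → ℤ) → A :=
  fun i => C.background x z (hE i).exists_forall_of_atTop.choose i

variable (hE : C.IsSparse (diffSet x z))

lemma limit_eq {K : ℕ} (hK : ∀ l ≥ K, C.SurvivorFree (diffSet x z) l i) :
    C.limit x z hE i = C.background x z K i := by
  have hKi := (hE i).exists_forall_of_atTop.choose_spec
  rw [limit, ← background_eq_of_survivorFree hKi (le_max_left _ K),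
    background_eq_of_survivorFree hK (le_max_right _ K)]

lemma limit_mem (hx : x ∈ C.X) : C.limit x z hE ∈ C.X := by
  refine C.mem_of_locally_mem _ fun m => ?_
  set K := (box m C.ρ).sup fun a => (hE a).exists_forall_of_atTop.choose
  refine ⟨C.background x z K, background_mem hx K, fun a ha => limit_eq hE fun l hl => ?_⟩
  refine (hE a).exists_forall_of_atTop.choose_spec l (le_trans ?_ hl)
  exact Finset.le_sup (f := fun a => (hE a).exists_forall_of_atTop.choose) (mem_box.mpr ha)

lemma eventually_iterate_eq_limit (hx : x ∈ C.X) (i : Fin d → ℤ) :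
    ∃ T, ∀ t ≥ T, C.F^[t] z i = C.limit x z hE i := by
  obtain ⟨K, hK⟩ := (hE i).exists_forall_of_atTop
  exact ⟨C.σ K, fun t ht => by rw [iterate_eq_background_of_survivorFree hx hK ht, limit_eq hE hK]⟩

lemma exists_not_survivorFree_of_limit_ne (h : C.limit x z hE i ≠ x i) :
    ∃ l, ¬ C.SurvivorFree (diffSet x z) l i := by
  obtain ⟨l, -, I, hI, a, ha, hia⟩ := exists_island_of_background_ne h
  refine ⟨l, fun hfree => ?_⟩
  have := hfree a (subset_of_mem_islandsOf hI ha)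
  have := supDist_comm i a
  omega

end Limit

section Probability

open scoped ENNReal

variable {Ω : Type*} [MeasurableSpace Ω] {P : Measure Ω} {E : Ω → Set (Fin d → ℤ)} {ε : ℝ≥0∞}

/-- Union bound over the witness families. -/
lemma measure_mem_survivors_le (hE : ∀ I : Finset (Fin d → ℤ), P {ω | ↑I ⊆ E ω} ≤ ε ^ I.card)
    (i : Fin d → ℤ) (k : ℕ) :
    P {ω | i ∈ C.survivors (E ω) k} ≤ C.witnessBound k * ε ^ 2 ^ k := by
  calc P {ω | i ∈ C.survivors (E ω) k}
      ≤ P (⋃ W ∈ C.witnesses k i, {ω | ↑W ⊆ E ω}) := by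
        refine measure_mono fun ω hω => ?_
        obtain ⟨W, hW, hWE⟩ := C.exists_witness_subset hω
        exact Set.mem_biUnion hW hWE
    _ ≤ ∑ W ∈ C.witnesses k i, P {ω | ↑W ⊆ E ω} := measure_biUnion_finset_le _ _
    _ ≤ ∑ _W ∈ C.witnesses k i, ε ^ 2 ^ k := by
        refine Finset.sum_le_sum fun W hW => ?_
        rw [← (C.witnesses_spec W hW).1]
        exact hE W
    _ ≤ C.witnessBound k * ε ^ 2 ^ k := by
        rw [Finset.sum_const, nsmul_eq_mul]
        gcongr
        exact_mod_cast C.card_witnesses_le k i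

lemma measure_not_survivorFree_le
    (hE : ∀ I : Finset (Fin d → ℤ), P {ω | ↑I ⊆ E ω} ≤ ε ^ I.card) (i : Fin d → ℤ) (l : ℕ) :
    P {ω | ¬ C.SurvivorFree (E ω) l i} ≤ (C.countBase * ε) ^ 2 ^ l := by
  calc P {ω | ¬ C.SurvivorFree (E ω) l i}
      ≤ P (⋃ j ∈ box i (C.ρ * C.σ (l + 1)), {ω | j ∈ C.survivors (E ω) l}) := by
        refine measure_mono fun ω hω => ?_
        obtain ⟨j, hj, hji⟩ : ∃ j ∈ C.survivors (E ω) l, supDist j i ≤ C.ρ * C.σ (l + 1) := by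
          simpa [SurvivorFree] using hω
        exact Set.mem_biUnion (mem_box.mpr hji) hj
    _ ≤ ∑ j ∈ box i (C.ρ * C.σ (l + 1)), P {ω | j ∈ C.survivors (E ω) l} :=
        measure_biUnion_finset_le _ _
    _ ≤ ∑ _j ∈ box i (C.ρ * C.σ (l + 1)), (C.witnessBound l * ε ^ 2 ^ l) :=
        Finset.sum_le_sum fun j _ => C.measure_mem_survivors_le hE j l
    _ = ((box i (C.ρ * C.σ (l + 1))).card * C.witnessBound l : ℕ) * ε ^ 2 ^ l := by
        rw [Finset.sum_const, nsmul_eq_mul]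
        push_cast
        ring
    _ ≤ (C.countBase ^ 2 ^ l : ℕ) * ε ^ 2 ^ l := by
        gcongr
        exact C.card_box_mul_witnessBound_le i l
    _ = (C.countBase * ε) ^ 2 ^ l := by push_cast; ring

lemma tsum_measure_not_survivorFree_le
    (hE : ∀ I : Finset (Fin d → ℤ), P {ω | ↑I ⊆ E ω} ≤ ε ^ I.card)
    (hε : C.countBase * ε ≤ 2⁻¹) (i : Fin d → ℤ) :
    ∑' l, P {ω | ¬ C.SurvivorFree (E ω) l i} ≤ 2 * (C.countBase * ε) := by
  set q := C.countBase * ε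
  have hq : q ≤ 1 := hε.trans (ENNReal.inv_le_one.mpr one_le_two)
  calc ∑' l, P {ω | ¬ C.SurvivorFree (E ω) l i}
      ≤ ∑' l : ℕ, q * 2⁻¹ ^ l := by
        refine ENNReal.tsum_le_tsum fun l => (C.measure_not_survivorFree_le hE i l).trans ?_
        calc q ^ 2 ^ l ≤ q ^ (l + 1) :=
              pow_le_pow_right_of_le_one' hq (Nat.lt_two_pow_self (n := l))
          _ = q * q ^ l := pow_succ' q l
          _ ≤ q * 2⁻¹ ^ l := by gcongr
    _ = 2 * q := by
        rw [ENNReal.tsum_mul_left, ENNReal.tsum_geometric, ENNReal.one_sub_inv_two, inv_inv,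
          mul_comm]

lemma measure_exists_not_survivorFree_le
    (hE : ∀ I : Finset (Fin d → ℤ), P {ω | ↑I ⊆ E ω} ≤ ε ^ I.card)
    (hε : C.countBase * ε ≤ 2⁻¹) (i : Fin d → ℤ) :
    P {ω | ∃ l, ¬ C.SurvivorFree (E ω) l i} ≤ 2 * (C.countBase * ε) := by
  rw [Set.ofPred_exists]
  exact (measure_iUnion_le _).trans (C.tsum_measure_not_survivorFree_le hE hε i)

/-- Borel–Cantelli, cell by cell. -/
lemma measure_not_isSparse
    (hE : ∀ I : Finset (Fin d → ℤ), P {ω | ↑I ⊆ E ω} ≤ ε ^ I.card)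
    (hε : C.countBase * ε ≤ 2⁻¹) : P {ω | ¬ C.IsSparse (E ω)} = 0 := by
  have hfin : 2 * (C.countBase * ε) ≠ ∞ :=
    ne_top_of_le_ne_top (by norm_num) (mul_le_mul_right hε 2)
  simp only [IsSparse, not_forall, Filter.not_eventually, Set.ofPred_exists]
  exact measure_iUnion_null fun i => measure_setOfPred_frequently_eq_zero
    (ne_top_of_le_ne_top hfin (C.tsum_measure_not_survivorFree_le hE hε i))

end Probability

end LinearStabiliser

end RandomStabilisation

open RandomStabilisation LinearStabiliser in
theorem stmt17_general {d : ℕ} {A : Type} [MeasurableSpace A]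
    (X : Set ((Fin d → ℤ) → A)) (hXsft : IsSFT X)
    (F : ((Fin d → ℤ) → A) → ((Fin d → ℤ) → A))
    (hFCA : ∃ (N : Finset (Fin d → ℤ)) (f : ({n // n ∈ N} → A) → A),
      ∀ x i, F x i = f (fun n => x (i + n.val)))
    (τ : ℕ → ℕ) (c₀ : ℕ) (hlin : ∀ n, τ n ≤ c₀ * n + c₀)
    (hFfix : ∀ x ∈ X, F x = x)
    (hFstab : ∀ y : (Fin d → ℤ) → A, (∃ x ∈ X, (diffSet x y).Finite) →
      ∃ t ≤ τ (pdist X y), F^[t] y ∈ X) :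
    (∀ x ∈ X, F x = x) ∧
    ∀ δ : ℝ, 0 < δ → ∃ ε : ℝ, 0 < ε ∧
      ∀ (Ω : Type) (_ : MeasurableSpace Ω) (P : Measure Ω)
        (_ : IsProbabilityMeasure P),
        ∀ x ∈ X, ∀ xt : Ω → ((Fin d → ℤ) → A),
          Measurable xt →
          (∀ I : Finset (Fin d → ℤ),
            P {ω | ∀ i ∈ I, xt ω i ≠ x i} ≤ ENNReal.ofReal ε ^ I.card) →
          ∃ y : Ω → ((Fin d → ℤ) → A),
            (∀ ω, y ω ∈ X) ∧
            P {ω | ∀ k, ∃ T, ∀ t ≥ T, F^[t] (xt ω) k = y ω k} = 1 ∧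
            ∀ k, P {ω | y ω k ≠ x k} ≤ ENNReal.ofReal δ := by
  classical
  obtain ⟨C, rfl, rfl⟩ := exists_linearStabiliser hXsft hFCA hlin hFfix hFstab
  refine ⟨C.F_fixed, fun δ hδ => ?_⟩
  obtain ⟨ε, hε, hεB, hεδ⟩ := exists_pos_ofReal_le C.countBase hδ
  refine ⟨ε, hε, fun Ω _ P _ x hx xt _ hxt => ?_⟩
  have hE (I : Finset (Fin d → ℤ)) :
      P {ω | ↑I ⊆ diffSet x (xt ω)} ≤ ENNReal.ofReal ε ^ I.card := by
    simpa [Set.subset_def, diffSet, ne_comm] using hxt I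
  have hsparse := C.measure_not_isSparse hE hεB
  refine ⟨fun ω => if h : C.IsSparse (diffSet x (xt ω)) then C.limit x (xt ω) h else x,
    fun ω => ?_, ?_, fun k => ?_⟩
  · dsimp only
    split_ifs with h
    exacts [limit_mem h hx, hx]
  · rw [← measure_univ (μ := P)]
    refine measure_congr (ae_eq_univ.mpr (measure_mono_null (fun ω hω => ?_) hsparse))
    simp only [Set.mem_compl_iff, Set.mem_ofPred_eq] at hω ⊢
    exact fun h => hω (by simpa only [dif_pos h] using eventually_iterate_eq_limit h hx)
  · refine (measure_mono fun ω hω => ?_).trans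
      ((C.measure_exists_not_survivorFree_le hE hεB k).trans hεδ)
    by_cases h : C.IsSparse (diffSet x (xt ω))
    · simp only [Set.mem_ofPred_eq, dif_pos h] at hω
      exact exists_not_survivorFree_of_limit_ne h hω
    · simp [dif_neg h] at hω

/-- Self-stabilisation from random perturbations: if a cellular automaton `F`
stabilises an SFT `X` from finite perturbations in linear time, then `F` also
stabilises `X` from random perturbations: the elements of `X` are fixed, and
for every `δ > 0` there is `ε > 0` such that for every `x ∈ X` and every
`ε`-perturbation `x̃` of `x`, there is a random configuration `y` with values in
`X` such that almost surely `F^t(x̃) → y` cellwise, and `P(y_k ≠ x_k) ≤ δ` for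
every cell `k`. -/
theorem stmt17 {d : ℕ} (hd : 1 ≤ d) {A : Type} [Fintype A]
    [MeasurableSpace A] [DiscreteMeasurableSpace A]
    (X : Set ((Fin d → ℤ) → A)) (hXsft : IsSFT X) (hXne : X.Nonempty)
    (F : ((Fin d → ℤ) → A) → ((Fin d → ℤ) → A))
    (hFCA : ∃ (N : Finset (Fin d → ℤ)) (f : ({n // n ∈ N} → A) → A),
      ∀ x i, F x i = f (fun n => x (i + n.val)))
    (τ : ℕ → ℕ) (c₀ : ℕ) (hlin : ∀ n, τ n ≤ c₀ * n + c₀)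
    (hFfix : ∀ x ∈ X, F x = x)
    (hFstab : ∀ y : (Fin d → ℤ) → A, (∃ x ∈ X, (diffSet x y).Finite) →
      ∃ t ≤ τ (pdist X y), F^[t] y ∈ X) :
    (∀ x ∈ X, F x = x) ∧
    ∀ δ : ℝ, 0 < δ → ∃ ε : ℝ, 0 < ε ∧
      ∀ (Ω : Type) (_ : MeasurableSpace Ω) (P : Measure Ω)
        (_ : IsProbabilityMeasure P),
        ∀ x ∈ X, ∀ xt : Ω → ((Fin d → ℤ) → A),
          Measurable xt →
          (∀ I : Finset (Fin d → ℤ),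
            P {ω | ∀ i ∈ I, xt ω i ≠ x i} ≤ ENNReal.ofReal ε ^ I.card) →
          ∃ y : Ω → ((Fin d → ℤ) → A),
            (∀ ω, y ω ∈ X) ∧
            P {ω | ∀ k, ∃ T, ∀ t ≥ T, F^[t] (xt ω) k = y ω k} = 1 ∧
            ∀ k, P {ω | y ω k ≠ x k} ≤ ENNReal.ofReal δ :=
  stmt17_general X hXsft F hFCA τ c₀ hlin hFfix hFstab
end

section
/- Let d ≥ 1 and let ρ : ℕ → ℕ satisfy ρ(ℓ) = O(ℓ) as ℓ → ∞. For every δ > 0 there exists ε > 0 such that: (i) every ε-random subset S of ℤ^d is almost surely ρ-sparse; and (ii) for every ε-random set S and each cell k ∈ ℤ^d, there is (almost surely, on the event that S is ρ-sparse) a partition of S into ρ-islands witnessing sparseness such that the probability that k lies in the ρ-territory of some island of this partition is less than δ. -/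
open MeasureTheory

/-- The `ρ`-territory of a finite set `A`: all cells within `ℓ^∞` distance
`ρ(diam A)` of `A` (i.e. `A + M + ⋯ + M` with `ρ(diam A)` copies of the Moore
neighbourhood `M`). -/
noncomputable def territory {d : ℕ} (ρ : ℕ → ℕ) (A : Set (Fin d → ℤ)) :
    Set (Fin d → ℤ) :=
  {c | ∃ a ∈ A, ∀ j, |c j - a j| ≤ (ρ (diamd A) : ℤ)}

/-- `C` is a partition of `S` into `ρ`-islands witnessing `ρ`-sparseness:
the parts are finite, nonempty, pairwise disjoint, their union is `S`, any two
distinct islands are well separated, and every cell lies in the territory of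
only finitely many islands. -/
def IsIslandPartition {d : ℕ} (ρ : ℕ → ℕ) (C : Set (Set (Fin d → ℤ)))
    (S : Set (Fin d → ℤ)) : Prop :=
  (∀ A ∈ C, A.Finite ∧ A.Nonempty) ∧
  C.PairwiseDisjoint id ∧
  ⋃₀ C = S ∧
  (∀ A ∈ C, ∀ B ∈ C, A ≠ B →
    A ∩ territory ρ B = ∅ ∨ territory ρ A ∩ B = ∅) ∧
  (∀ k : Fin d → ℤ, {A ∈ C | k ∈ territory ρ A}.Finite)

/-- `S` is `ρ`-sparse. -/
def Sparse {d : ℕ} (ρ : ℕ → ℕ) (S : Set (Fin d → ℤ)) : Prop :=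
  ∃ C, IsIslandPartition ρ C S

/-!
Islands are removed in stages at geometrically growing scales `a_n = Λ^(n+1)`,
`Λ = 64 (c₀ + 1)`. At stage `n` the surviving cells are grouped into components with links of
length `b_n ≈ 4 (c₀ + 1) a_n`; components of diameter at most `a_n` become islands of rank `n`
and the rest survive. As `ρ` is at most linear, the territory of a rank-`n` island has radius
below `b_n`, so it can meet neither another component of its stage nor any later survivor: this
is the separation. A survivor of stage `n` has a survivor of stage `n - 1` at distance of order
`a_(n-1)`, and recursively carries a configuration of `2^n` cells of `S` out of at most
`(Λ^(4d))^(2^n)` candidates. Hence a cell is within the territory radius of a stage-`n` survivor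
with probability at most `(Λ^(6d) ε)^(2^n)`, which is summable; Borel–Cantelli makes every cell
eventually far from all survivors, which gives the partition, and the same sum bounds the
probability that a cell lies in some territory.
-/

open scoped ENNReal

lemma ENNReal.tsum_pow_two_pow_le {q : ℝ≥0∞} (hq : q ≤ 2⁻¹) :
    ∑' n : ℕ, q ^ 2 ^ n ≤ 2 * q :=
  calc ∑' n : ℕ, q ^ 2 ^ n ≤ ∑' n : ℕ, q ^ (n + 1) :=
        ENNReal.tsum_le_tsum fun _ =>
          pow_le_pow_of_le_one zero_le (hq.trans (by norm_num)) Nat.lt_two_pow_self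
    _ = q * (1 - q)⁻¹ := ENNReal.tsum_geometric_add_one q
    _ ≤ q * 2 := by
        gcongr
        rw [ENNReal.inv_le_iff_inv_le, ← ENNReal.one_sub_inv_two]
        exact tsub_le_tsub_left hq 1
    _ = 2 * q := mul_comm _ _

lemma Nat.exists_and_not_succ {p : ℕ → Prop} (h₀ : p 0) {m : ℕ} (hm : ¬ p m) :
    ∃ n, p n ∧ ¬ p (n + 1) := by
  induction m with
  | zero => exact absurd h₀ hm
  | succ m ih =>
    by_cases h : p m
    exacts [⟨m, h, hm⟩, ih h]

lemma exists_pos_mul_ofReal_le (W : ℕ) {δ : ℝ} (hδ : 0 < δ) : ∃ ε : ℝ, 0 < ε ∧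
    (W : ℝ≥0∞) * ENNReal.ofReal ε ≤ 2⁻¹ ∧
      2 * ((W : ℝ≥0∞) * ENNReal.ofReal ε) < ENNReal.ofReal δ := by
  set η := min δ 1 / 4
  have hη : 0 < η := by positivity
  refine ⟨η / (W + 1), by positivity, ?_⟩
  have hWη : (W : ℝ≥0∞) * ENNReal.ofReal (η / (W + 1)) ≤ ENNReal.ofReal η := by
    rw [← ENNReal.ofReal_natCast, ← ENNReal.ofReal_mul (by positivity)]
    refine ENNReal.ofReal_le_ofReal ?_
    rw [mul_div_assoc', div_le_iff₀ (by positivity)]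
    nlinarith
  constructor
  · refine hWη.trans ?_
    rw [← ENNReal.ofReal_ofNat 2, ← ENNReal.ofReal_inv_of_pos (by norm_num)]
    exact ENNReal.ofReal_le_ofReal (by have := min_le_right δ 1; norm_num [η]; linarith)
  · refine (mul_le_mul_right hWη 2).trans_lt ?_
    rw [← ENNReal.ofReal_ofNat 2, ← ENNReal.ofReal_mul (by norm_num),
      ENNReal.ofReal_lt_ofReal_iff hδ]
    have := min_le_left δ 1
    simp only [η]
    linarith

namespace IslandHierarchy

variable {d : ℕ}

def supDist (x y : Fin d → ℤ) : ℕ := Finset.univ.sup fun j => (x j - y j).natAbs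

lemma supDist_le_iff {x y : Fin d → ℤ} {r : ℕ} :
    supDist x y ≤ r ↔ ∀ j, (x j - y j).natAbs ≤ r := by
  simp [supDist, Finset.sup_le_iff]

@[simp]
lemma supDist_self (x : Fin d → ℤ) : supDist x x = 0 := by simp [supDist]

lemma supDist_comm (x y : Fin d → ℤ) : supDist x y = supDist y x := by
  simp only [supDist, ← Int.natAbs_neg (x _ - y _), neg_sub]

lemma supDist_triangle (x y z : Fin d → ℤ) : supDist x z ≤ supDist x y + supDist y z := by
  refine supDist_le_iff.2 fun j => ?_
  calc (x j - z j).natAbs = ((x j - y j) + (y j - z j)).natAbs := by ring_nf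
    _ ≤ (x j - y j).natAbs + (y j - z j).natAbs := Int.natAbs_add_le _ _
    _ ≤ supDist x y + supDist y z :=
      Nat.add_le_add (supDist_le_iff.1 le_rfl j) (supDist_le_iff.1 le_rfl j)

noncomputable def supBall (x : Fin d → ℤ) (r : ℕ) : Finset (Fin d → ℤ) :=
  Fintype.piFinset fun j => Finset.Icc (x j - r) (x j + r)

@[simp]
lemma mem_supBall {x y : Fin d → ℤ} {r : ℕ} : y ∈ supBall x r ↔ supDist x y ≤ r := by
  simp only [supBall, Fintype.mem_piFinset, Finset.mem_Icc, supDist_le_iff]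
  exact forall_congr' fun j => by omega

lemma card_supBall (x : Fin d → ℤ) (r : ℕ) : (supBall x r).card = (2 * r + 1) ^ d := by
  have (j : Fin d) : (Finset.Icc (x j - r) (x j + r)).card = 2 * r + 1 := by
    rw [Int.card_Icc]; omega
  simp [supBall, Fintype.card_piFinset, this]

lemma diamd_le_of_supDist_le {A : Set (Fin d → ℤ)} {x : Fin d → ℤ} {r : ℕ}
    (h : ∀ y ∈ A, supDist x y ≤ r) : diamd A ≤ 2 * r + 1 := by
  refine Nat.sInf_le ⟨fun j => x j - r, fun a ha j => ?_⟩
  have := supDist_le_iff.1 (h a ha) j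
  dsimp only
  omega

lemma subset_territory (ρ : ℕ → ℕ) (A : Set (Fin d → ℤ)) : A ⊆ territory ρ A :=
  fun a ha => ⟨a, ha, fun j => by simp⟩

lemma exists_supDist_le_of_mem_territory {ρ : ℕ → ℕ} {A : Set (Fin d → ℤ)}
    {k : Fin d → ℤ} (hk : k ∈ territory ρ A) :
    ∃ y ∈ A, supDist k y ≤ ρ (diamd A) := by
  obtain ⟨a, ha, hle⟩ := hk
  exact ⟨a, ha, supDist_le_iff.2 fun j => by have := abs_le.1 (hle j); omega⟩

def Linked (s : Set (Fin d → ℤ)) (b : ℕ) (u v : Fin d → ℤ) : Prop :=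
  u ∈ s ∧ v ∈ s ∧ supDist u v ≤ b

instance (s : Set (Fin d → ℤ)) (b : ℕ) : Std.Symm (Linked s b) where
  symm _ _ := fun ⟨hu, hv, h⟩ => ⟨hv, hu, supDist_comm _ _ ▸ h⟩

def component (s : Set (Fin d → ℤ)) (b : ℕ) (x : Fin d → ℤ) : Set (Fin d → ℤ) :=
  {y | Relation.TransGen (Linked s b) x y}

section Component

variable {s : Set (Fin d → ℤ)} {b : ℕ} {x y u : Fin d → ℤ}

lemma component_subset : component s b x ⊆ s := fun _ h => by
  obtain ⟨_, _, h⟩ := Relation.TransGen.tail'_iff.1 h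
  exact h.2.1

lemma mem_component_self (hx : x ∈ s) : x ∈ component s b x :=
  .single ⟨hx, hx, by simp⟩

lemma component_eq_of_mem (hy : y ∈ component s b x) : component s b y = component s b x :=
  Set.ext fun _ => ⟨hy.trans, (Std.Symm.symm _ _ hy).trans⟩

lemma mem_component_of_supDist_le (hy : y ∈ component s b x) (hu : u ∈ s)
    (h : supDist y u ≤ b) : u ∈ component s b x :=
  Relation.TransGen.tail hy ⟨component_subset hy, hu, h⟩

/-- On a chain of links from `x` to `w`, the first cell beyond distance `r / 2` overshoots it by
at most one link. -/
lemma exists_mem_component_of_lt {r : ℕ} {w : Fin d → ℤ} (hw : w ∈ component s b x)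
    (hr : r < 2 * supDist x w) :
    ∃ v ∈ component s b x, r < 2 * supDist x v ∧ 2 * supDist x v ≤ r + 2 * b := by
  induction hw with
  | single h => exact ⟨_, .single h, hr, by have := h.2.2; omega⟩
  | @tail u w hu h ih =>
    by_cases hru : r < 2 * supDist x u
    · exact ih hru
    · refine ⟨w, hu.tail h, hr, ?_⟩
      have := supDist_triangle x u w
      have := h.2.2
      omega

end Component

/-- `64` leaves room for `2 * (linkLength c₀ n + scale c₀ n) + 1 ≤ scale c₀ (n + 1)` and for
`6 * configRadius c₀ n ≤ scale c₀ n`. -/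
def scaleRatio (c₀ : ℕ) : ℕ := 64 * (c₀ + 1)

def scale (c₀ n : ℕ) : ℕ := scaleRatio c₀ ^ (n + 1)

def territoryRadius (c₀ n : ℕ) : ℕ := 3 * (c₀ + 1) * scale c₀ n

def linkLength (c₀ n : ℕ) : ℕ := territoryRadius c₀ n + scale c₀ n

lemma one_le_scaleRatio (c₀ : ℕ) : 1 ≤ scaleRatio c₀ := by unfold scaleRatio; omega

lemma two_le_scale (c₀ n : ℕ) : 2 ≤ scale c₀ n :=
  calc 2 ≤ scaleRatio c₀ ^ 1 := by rw [pow_one, scaleRatio]; omega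
    _ ≤ scale c₀ n := Nat.pow_le_pow_right (one_le_scaleRatio c₀) (by omega)

lemma scale_succ (c₀ n : ℕ) : scale c₀ (n + 1) = 64 * (c₀ + 1) * scale c₀ n := by
  rw [scale, pow_succ', scale, scaleRatio]

def DiamLE (A : Set (Fin d → ℤ)) (r : ℕ) : Prop := ∀ y ∈ A, ∀ z ∈ A, supDist y z ≤ r

def survivors (c₀ : ℕ) (S : Set (Fin d → ℤ)) : ℕ → Set (Fin d → ℤ)
  | 0 => S
  | n + 1 => {x ∈ survivors c₀ S n |
      ¬ DiamLE (component (survivors c₀ S n) (linkLength c₀ n) x) (scale c₀ n)}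

def IsIslandAt (c₀ : ℕ) (S : Set (Fin d → ℤ)) (n : ℕ) (A : Set (Fin d → ℤ)) : Prop :=
  ∃ x ∈ survivors c₀ S n,
    A = component (survivors c₀ S n) (linkLength c₀ n) x ∧ DiamLE A (scale c₀ n)

def islands (c₀ : ℕ) (S : Set (Fin d → ℤ)) : Set (Set (Fin d → ℤ)) :=
  {A | ∃ n, IsIslandAt c₀ S n A}

def NearSurvivor (c₀ : ℕ) (S : Set (Fin d → ℤ)) (n : ℕ) (k : Fin d → ℤ) : Prop :=
  ∃ y ∈ survivors c₀ S n, supDist k y ≤ territoryRadius c₀ n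

section Islands

variable {c₀ : ℕ} {S A B : Set (Fin d → ℤ)} {n m : ℕ} {k x y : Fin d → ℤ}
  {ρ : ℕ → ℕ}

lemma survivors_antitone : Antitone (survivors c₀ S) :=
  antitone_nat_of_succ_le fun _ _ hx => hx.1

lemma survivors_subset (n : ℕ) : survivors c₀ S n ⊆ S :=
  survivors_antitone (Nat.zero_le n)

lemma nearSurvivor_of_mem (hk : k ∈ survivors c₀ S n) : NearSurvivor c₀ S n k :=
  ⟨k, hk, by simp⟩

lemma isIslandAt_component (hx : x ∈ survivors c₀ S n) (hx' : x ∉ survivors c₀ S (n + 1)) :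
    IsIslandAt c₀ S n (component (survivors c₀ S n) (linkLength c₀ n) x) :=
  ⟨x, hx, rfl, not_not.1 fun h => hx' ⟨hx, h⟩⟩

namespace IsIslandAt

lemma subset_survivors (hA : IsIslandAt c₀ S n A) : A ⊆ survivors c₀ S n := by
  obtain ⟨x, -, rfl, -⟩ := hA
  exact component_subset

lemma notMem_survivors_succ (hA : IsIslandAt c₀ S n A) (hy : y ∈ A) :
    y ∉ survivors c₀ S (n + 1) := by
  obtain ⟨x, -, rfl, hsmall⟩ := hA
  exact fun h => h.2 (component_eq_of_mem hy ▸ hsmall)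

lemma nonempty (hA : IsIslandAt c₀ S n A) : A.Nonempty :=
  let ⟨x, hx, hA, _⟩ := hA
  ⟨x, hA ▸ mem_component_self hx⟩

lemma finite (hA : IsIslandAt c₀ S n A) : A.Finite := by
  obtain ⟨x, hx, rfl, hsmall⟩ := hA
  exact (supBall x (scale c₀ n)).finite_toSet.subset fun y hy =>
    mem_supBall.2 (hsmall x (mem_component_self hx) y hy)

lemma rho_diamd_le (hρ : ∀ l, ρ l ≤ c₀ * l + c₀) (hA : IsIslandAt c₀ S n A) :
    ρ (diamd A) ≤ territoryRadius c₀ n := by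
  obtain ⟨x, hx, rfl, hsmall⟩ := hA
  have hdiam := diamd_le_of_supDist_le (hsmall x (mem_component_self hx))
  have := two_le_scale c₀ n
  calc ρ _ ≤ c₀ * diamd _ + c₀ := hρ _
    _ ≤ c₀ * (2 * scale c₀ n + 1) + c₀ := by gcongr
    _ ≤ territoryRadius c₀ n := by unfold territoryRadius; nlinarith

lemma exists_supDist_le_of_mem_territory (hρ : ∀ l, ρ l ≤ c₀ * l + c₀)
    (hA : IsIslandAt c₀ S n A) (hk : k ∈ territory ρ A) :
    ∃ y ∈ A, supDist k y ≤ territoryRadius c₀ n :=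
  let ⟨y, hy, h⟩ := IslandHierarchy.exists_supDist_le_of_mem_territory hk
  ⟨y, hy, h.trans (hA.rho_diamd_le hρ)⟩

lemma nearSurvivor_of_mem_territory (hρ : ∀ l, ρ l ≤ c₀ * l + c₀)
    (hA : IsIslandAt c₀ S n A) (hk : k ∈ territory ρ A) : NearSurvivor c₀ S n k :=
  let ⟨y, hy, hky⟩ := hA.exists_supDist_le_of_mem_territory hρ hk
  ⟨y, hA.subset_survivors hy, hky⟩

/-- A cell of stage `m ≥ n` in the territory of `A` is linked to `A`, hence lies in `A`;
but `A` is a whole component of stage `n` and is gone at stage `n + 1`. -/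
lemma territory_inter_eq_empty (hρ : ∀ l, ρ l ≤ c₀ * l + c₀) (hA : IsIslandAt c₀ S n A)
    (hB : IsIslandAt c₀ S m B) (hnm : n ≤ m) (hAB : A ≠ B) : territory ρ A ∩ B = ∅ := by
  refine Set.eq_empty_iff_forall_notMem.2 fun u ⟨huA', huB⟩ => ?_
  obtain ⟨y, hy, hyu⟩ := hA.exists_supDist_le_of_mem_territory hρ huA'
  have huS : u ∈ survivors c₀ S n := survivors_antitone hnm (hB.subset_survivors huB)
  have huA : u ∈ A := by
    obtain ⟨x, -, rfl, -⟩ := hA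
    refine mem_component_of_supDist_le hy huS ?_
    rw [supDist_comm]
    unfold linkLength
    omega
  rcases hnm.eq_or_lt with rfl | hlt
  · obtain ⟨x, -, rfl, -⟩ := hA
    obtain ⟨z, -, rfl, -⟩ := hB
    exact hAB ((component_eq_of_mem huA).symm.trans (component_eq_of_mem huB))
  · exact hA.notMem_survivors_succ huA (survivors_antitone hlt (hB.subset_survivors huB))

end IsIslandAt

lemma islands_separated (hρ : ∀ l, ρ l ≤ c₀ * l + c₀) (hA : A ∈ islands c₀ S)
    (hB : B ∈ islands c₀ S) (hAB : A ≠ B) :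
    A ∩ territory ρ B = ∅ ∨ territory ρ A ∩ B = ∅ := by
  obtain ⟨n, hA⟩ := hA
  obtain ⟨m, hB⟩ := hB
  rcases le_total n m with h | h
  · exact .inr (hA.territory_inter_eq_empty hρ hB h hAB)
  · exact .inl (Set.inter_comm _ _ ▸ hB.territory_inter_eq_empty hρ hA h hAB.symm)

lemma pairwiseDisjoint_islands (hρ : ∀ l, ρ l ≤ c₀ * l + c₀) :
    (islands c₀ S).PairwiseDisjoint id := fun A hA B hB hAB => by
  rcases islands_separated hρ hA hB hAB with h | h
  · exact (Set.disjoint_iff_inter_eq_empty.2 h).mono_right (subset_territory ρ B)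
  · exact (Set.disjoint_iff_inter_eq_empty.2 h).mono_left (subset_territory ρ A)

lemma sUnion_islands (hS : ∀ x ∈ S, ∃ m, x ∉ survivors c₀ S m) :
    ⋃₀ islands c₀ S = S := by
  refine Set.Subset.antisymm (Set.sUnion_subset fun _ ⟨n, hA⟩ =>
    hA.subset_survivors.trans (survivors_subset n)) fun x hx => ?_
  obtain ⟨m, hm⟩ := hS x hx
  obtain ⟨n, hn, hn'⟩ := Nat.exists_and_not_succ (p := (x ∈ survivors c₀ S ·)) hx hm
  exact ⟨_, ⟨n, isIslandAt_component hn hn'⟩, mem_component_self hn⟩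

lemma finite_setOf_mem_territory (hρ : ∀ l, ρ l ≤ c₀ * l + c₀)
    (hk : ∀ᶠ n in Filter.atTop, ¬ NearSurvivor c₀ S n k) :
    {A ∈ islands c₀ S | k ∈ territory ρ A}.Finite := by
  obtain ⟨N, hN⟩ := Filter.eventually_atTop.1 hk
  refine ((Set.finite_Iio N).biUnion fun n _ =>
    (supBall k (linkLength c₀ n)).finite_toSet.finite_subsets).subset ?_
  rintro A ⟨⟨n, hA⟩, hkA⟩
  obtain ⟨y, hy, hky⟩ := hA.exists_supDist_le_of_mem_territory hρ hkA
  refine Set.mem_biUnion (x := n)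
    (not_le.1 fun h => hN n h (hA.nearSurvivor_of_mem_territory hρ hkA)) fun w hw => ?_
  obtain ⟨x, -, -, hsmall⟩ := hA
  exact mem_supBall.2 ((supDist_triangle k y w).trans (add_le_add hky (hsmall y hy w hw)))

theorem isIslandPartition_islands (hρ : ∀ l, ρ l ≤ c₀ * l + c₀)
    (hfar : ∀ k, ∀ᶠ n in Filter.atTop, ¬ NearSurvivor c₀ S n k) :
    IsIslandPartition ρ (islands c₀ S) S :=
  ⟨fun _ ⟨_, hA⟩ => ⟨hA.finite, hA.nonempty⟩,
    pairwiseDisjoint_islands hρ,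
    sUnion_islands fun x _ =>
      let ⟨m, hm⟩ := (hfar x).exists
      ⟨m, fun hx => hm (nearSurvivor_of_mem hx)⟩,
    fun _ hA _ hB => islands_separated hρ hA hB,
    fun k => finite_setOf_mem_territory hρ (hfar k)⟩

end Islands

def configRadius (c₀ : ℕ) : ℕ → ℕ
  | 0 => 0
  | n + 1 => linkLength c₀ n + scale c₀ n + configRadius c₀ n

lemma six_mul_configRadius_le (c₀ n : ℕ) : 6 * configRadius c₀ n ≤ scale c₀ n := by
  induction n with
  | zero => simp [configRadius]
  | succ n ih =>
    rw [configRadius, scale_succ]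
    unfold linkLength territoryRadius
    nlinarith [two_le_scale c₀ n]

/-- Sets of `2 ^ n` cells that must lie in `S` when `x` survives stage `n`: such an `x` has a
survivor `v` of stage `n - 1` at distance about `scale c₀ (n - 1)`, and both carry a
configuration of the previous generation. -/
noncomputable def configs (c₀ : ℕ) : ℕ → (Fin d → ℤ) → Finset (Finset (Fin d → ℤ))
  | 0, x => {{x}}
  | n + 1, x =>
    ((supBall x (linkLength c₀ n + scale c₀ n)).filter fun v => scale c₀ n < 2 * supDist x v)
      |>.biUnion fun v => Finset.image₂ (· ∪ ·) (configs c₀ n x) (configs c₀ n v)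

section Configs

variable {c₀ n : ℕ} {x : Fin d → ℤ} {I : Finset (Fin d → ℤ)}

lemma mem_configs_succ : I ∈ configs c₀ (n + 1) x ↔
    ∃ v, (supDist x v ≤ linkLength c₀ n + scale c₀ n ∧ scale c₀ n < 2 * supDist x v) ∧
      ∃ J ∈ configs c₀ n x, ∃ K ∈ configs c₀ n v, J ∪ K = I := by
  simp [configs, Finset.mem_image₂]

lemma supDist_le_of_mem_configs (hI : I ∈ configs c₀ n x) :
    ∀ y ∈ I, supDist x y ≤ configRadius c₀ n := by
  induction n generalizing x I with
  | zero => simp_all [configs, configRadius]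
  | succ n ih =>
    obtain ⟨v, ⟨hv, -⟩, J, hJ, K, hK, rfl⟩ := mem_configs_succ.1 hI
    intro y hy
    rcases Finset.mem_union.1 hy with hy | hy
    · exact (ih hJ y hy).trans (by rw [configRadius]; omega)
    · calc supDist x y ≤ supDist x v + supDist v y := supDist_triangle x v y
        _ ≤ configRadius c₀ (n + 1) := by rw [configRadius]; have := ih hK y hy; omega

lemma card_of_mem_configs (hI : I ∈ configs c₀ n x) : I.card = 2 ^ n := by
  induction n generalizing x I with
  | zero => simp_all [configs]
  | succ n ih =>
    obtain ⟨v, ⟨-, hv⟩, J, hJ, K, hK, rfl⟩ := mem_configs_succ.1 hI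
    have hdisj : Disjoint J K := Finset.disjoint_left.2 fun y hyJ hyK => by
      have := supDist_triangle x y v
      have := supDist_le_of_mem_configs hJ y hyJ
      have := supDist_le_of_mem_configs hK y hyK
      have := six_mul_configRadius_le c₀ n
      have := two_le_scale c₀ n
      rw [supDist_comm v y] at *
      omega
    rw [Finset.card_union_of_disjoint hdisj, ih hJ, ih hK, pow_succ]
    ring

lemma exists_survivor_of_mem_survivors_succ {S : Set (Fin d → ℤ)}
    (hx : x ∈ survivors c₀ S (n + 1)) : ∃ v ∈ survivors c₀ S n,
      scale c₀ n < 2 * supDist x v ∧ supDist x v ≤ linkLength c₀ n + scale c₀ n := by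
  obtain ⟨-, hbig⟩ := hx
  simp only [DiamLE, not_forall, not_le] at hbig
  obtain ⟨y, hy, z, hz, hyz⟩ := hbig
  obtain ⟨w, hw, hwx⟩ : ∃ w ∈ component (survivors c₀ S n) (linkLength c₀ n) x,
      scale c₀ n < 2 * supDist x w := by
    have := supDist_triangle y x z
    rw [supDist_comm y x] at this
    by_cases h : scale c₀ n < 2 * supDist x y
    exacts [⟨y, hy, h⟩, ⟨z, hz, by omega⟩]
  obtain ⟨v, hv, hv₁, hv₂⟩ := exists_mem_component_of_lt hw hwx
  exact ⟨v, component_subset hv, hv₁, by omega⟩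

lemma exists_mem_configs_subset {S : Set (Fin d → ℤ)} (hx : x ∈ survivors c₀ S n) :
    ∃ I ∈ configs c₀ n x, ↑I ⊆ S := by
  induction n generalizing x with
  | zero => exact ⟨{x}, by simp [configs], by simpa [survivors] using hx⟩
  | succ n ih =>
    obtain ⟨J, hJ, hJS⟩ := ih hx.1
    obtain ⟨v, hv, hv₁, hv₂⟩ := exists_survivor_of_mem_survivors_succ hx
    obtain ⟨K, hK, hKS⟩ := ih hv
    exact ⟨J ∪ K, mem_configs_succ.2 ⟨v, ⟨hv₂, hv₁⟩, J, hJ, K, hK, rfl⟩,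
      by simpa using And.intro hJS hKS⟩

end Configs

lemma card_supBall_le (c₀ : ℕ) {n r : ℕ} (x : Fin d → ℤ)
    (hr : r ≤ linkLength c₀ n + scale c₀ n) :
    (supBall x r).card ≤ scaleRatio c₀ ^ (d * (n + 2)) := by
  rw [card_supBall, pow_mul']
  have : scaleRatio c₀ ^ (n + 2) = 64 * (c₀ + 1) * scale c₀ n := by
    rw [← scale_succ, scale]
  gcongr
  unfold linkLength territoryRadius at hr
  nlinarith [two_le_scale c₀ n]

def configBound (c₀ d : ℕ) : ℕ → ℕ
  | 0 => 1
  | n + 1 => scaleRatio c₀ ^ (d * (n + 2)) * configBound c₀ d n ^ 2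

lemma card_configs_le (c₀ n : ℕ) (x : Fin d → ℤ) :
    (configs c₀ n x).card ≤ configBound c₀ d n := by
  induction n generalizing x with
  | zero => simp [configs, configBound]
  | succ n ih =>
    refine (Finset.card_biUnion_le_card_mul _ _ _ fun v _ => (Finset.card_image₂_le _ _ _).trans
      ((Nat.mul_le_mul (ih x) (ih v)).trans_eq (sq _).symm)).trans ?_
    rw [configBound]
    exact Nat.mul_le_mul_right _
      ((Finset.card_filter_le _ _).trans (card_supBall_le c₀ x le_rfl))

lemma configBound_mul_le (c₀ d n : ℕ) :
    configBound c₀ d n * scaleRatio c₀ ^ (d * (n + 4)) ≤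
      scaleRatio c₀ ^ (d * 2 ^ (n + 2)) := by
  induction n with
  | zero => simp [configBound]
  | succ n ih =>
    calc configBound c₀ d (n + 1) * scaleRatio c₀ ^ (d * (n + 1 + 4))
        = configBound c₀ d n ^ 2 * scaleRatio c₀ ^ (d * (2 * n + 7)) := by
          rw [configBound]; ring
      _ ≤ configBound c₀ d n ^ 2 * scaleRatio c₀ ^ (d * (2 * n + 8)) := by
          gcongr
          · exact one_le_scaleRatio c₀
          · omega
      _ = (configBound c₀ d n * scaleRatio c₀ ^ (d * (n + 4))) ^ 2 := by ring
      _ ≤ (scaleRatio c₀ ^ (d * 2 ^ (n + 2))) ^ 2 := by gcongr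
      _ = scaleRatio c₀ ^ (d * 2 ^ (n + 1 + 2)) := by ring

lemma configBound_le (c₀ d n : ℕ) :
    configBound c₀ d n ≤ (scaleRatio c₀ ^ (4 * d)) ^ 2 ^ n :=
  calc configBound c₀ d n ≤ configBound c₀ d n * scaleRatio c₀ ^ (d * (n + 4)) :=
        Nat.le_mul_of_pos_right _ (Nat.pow_pos (one_le_scaleRatio c₀))
    _ ≤ scaleRatio c₀ ^ (d * 2 ^ (n + 2)) := configBound_mul_le c₀ d n
    _ = (scaleRatio c₀ ^ (4 * d)) ^ 2 ^ n := by ring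

section Probability

variable {Ω : Type*} [MeasurableSpace Ω] {P : Measure Ω} {S : Ω → Set (Fin d → ℤ)}
  {ε : ℝ≥0∞}

lemma measure_mem_survivors_le
    (hS : ∀ I : Finset (Fin d → ℤ), P {ω | ↑I ⊆ S ω} ≤ ε ^ I.card)
    (c₀ n : ℕ) (x : Fin d → ℤ) :
    P {ω | x ∈ survivors c₀ (S ω) n} ≤ ((scaleRatio c₀ ^ (4 * d) : ℕ) * ε) ^ 2 ^ n :=
  calc P {ω | x ∈ survivors c₀ (S ω) n}
      ≤ P (⋃ I ∈ configs c₀ n x, {ω | ↑I ⊆ S ω}) :=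
        measure_mono fun _ hω =>
          let ⟨_, hI, hIS⟩ := exists_mem_configs_subset hω
          Set.mem_biUnion hI hIS
    _ ≤ ∑ I ∈ configs c₀ n x, P {ω | ↑I ⊆ S ω} := measure_biUnion_finset_le _ _
    _ ≤ ∑ _ ∈ configs c₀ n x, ε ^ 2 ^ n :=
        Finset.sum_le_sum fun _ hI => card_of_mem_configs hI ▸ hS _
    _ = (configs c₀ n x).card * ε ^ 2 ^ n := by rw [Finset.sum_const, nsmul_eq_mul]
    _ ≤ ((scaleRatio c₀ ^ (4 * d)) ^ 2 ^ n : ℕ) * ε ^ 2 ^ n := by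
        gcongr
        exact_mod_cast (card_configs_le c₀ n x).trans (configBound_le c₀ d n)
    _ = _ := by push_cast; rw [mul_pow]

lemma measure_nearSurvivor_le
    (hS : ∀ I : Finset (Fin d → ℤ), P {ω | ↑I ⊆ S ω} ≤ ε ^ I.card)
    (c₀ n : ℕ) (k : Fin d → ℤ) :
    P {ω | NearSurvivor c₀ (S ω) n k} ≤ ((scaleRatio c₀ ^ (6 * d) : ℕ) * ε) ^ 2 ^ n := by
  set B := supBall k (territoryRadius c₀ n)
  set q : ℝ≥0∞ := (scaleRatio c₀ ^ (4 * d) : ℕ) * ε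
  have hball : B.card ≤ (scaleRatio c₀ ^ (2 * d)) ^ 2 ^ n := by
    refine (card_supBall_le c₀ (n := n) k (by unfold linkLength; omega)).trans ?_
    rw [← pow_mul]
    refine Nat.pow_le_pow_right (one_le_scaleRatio c₀) ?_
    have := Nat.lt_two_pow_self (n := n + 1)
    rw [pow_succ] at this
    nlinarith
  calc P {ω | NearSurvivor c₀ (S ω) n k}
      ≤ P (⋃ y ∈ B, {ω | y ∈ survivors c₀ (S ω) n}) :=
        measure_mono fun _ ⟨_, hy, hky⟩ => Set.mem_biUnion (mem_supBall.2 hky) hy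
    _ ≤ ∑ y ∈ B, P {ω | y ∈ survivors c₀ (S ω) n} := measure_biUnion_finset_le _ _
    _ ≤ ∑ _ ∈ B, q ^ 2 ^ n := Finset.sum_le_sum fun y _ =>
        measure_mem_survivors_le hS c₀ n y
    _ = B.card * q ^ 2 ^ n := by rw [Finset.sum_const, nsmul_eq_mul]
    _ ≤ ((scaleRatio c₀ ^ (2 * d)) ^ 2 ^ n : ℕ) * q ^ 2 ^ n := by gcongr
    _ = _ := by simp only [q]; push_cast; ring

end Probability

end IslandHierarchy

open IslandHierarchy

theorem stmt18_general {d : ℕ} (ρ : ℕ → ℕ) (c₀ : ℕ)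
    (hρ : ∀ l : ℕ, ρ l ≤ c₀ * l + c₀) :
    ∀ δ : ℝ, 0 < δ → ∃ ε : ℝ, 0 < ε ∧
      ∀ (Ω : Type) (_ : MeasurableSpace Ω) (P : Measure Ω)
        (_ : IsProbabilityMeasure P)
        (S : Ω → Set (Fin d → ℤ)),
        (∀ i : Fin d → ℤ, MeasurableSet {ω | i ∈ S ω}) →
        (∀ I : Finset (Fin d → ℤ),
          P {ω | ↑I ⊆ S ω} ≤ ENNReal.ofReal ε ^ I.card) →
        (∀ᵐ ω ∂P, Sparse ρ (S ω)) ∧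
        ∃ C : Ω → Set (Set (Fin d → ℤ)),
          (∀ᵐ ω ∂P, IsIslandPartition ρ (C ω) (S ω)) ∧
          ∀ k : Fin d → ℤ,
            P {ω | ∃ A ∈ C ω, k ∈ territory ρ A} < ENNReal.ofReal δ := by
  intro δ hδ
  obtain ⟨ε, hε, hq, hqδ⟩ := exists_pos_mul_ofReal_le (scaleRatio c₀ ^ (6 * d)) hδ
  refine ⟨ε, hε, fun Ω _ P _ S _ hS => ?_⟩
  have hsum (k : Fin d → ℤ) :
      ∑' n, P {ω | NearSurvivor c₀ (S ω) n k} < ENNReal.ofReal δ :=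
    (ENNReal.tsum_le_tsum fun n => measure_nearSurvivor_le hS c₀ n k).trans_lt
      ((ENNReal.tsum_pow_two_pow_le hq).trans_lt hqδ)
  have hpart : ∀ᵐ ω ∂P, IsIslandPartition ρ (islands c₀ (S ω)) (S ω) := by
    filter_upwards [ae_all_iff.2 fun k => ae_eventually_notMem (hsum k).ne_top] with ω hω
    exact isIslandPartition_islands hρ hω
  refine ⟨hpart.mono fun ω h => ⟨_, h⟩, fun ω => islands c₀ (S ω), hpart, fun k => ?_⟩
  calc P {ω | ∃ A ∈ islands c₀ (S ω), k ∈ territory ρ A}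
      ≤ P (⋃ n, {ω | NearSurvivor c₀ (S ω) n k}) :=
        measure_mono fun _ ⟨_, ⟨n, hA⟩, hk⟩ =>
          Set.mem_iUnion.2 ⟨n, hA.nearSurvivor_of_mem_territory hρ hk⟩
    _ ≤ ∑' n, P {ω | NearSurvivor c₀ (S ω) n k} := measure_iUnion_le _
    _ < ENNReal.ofReal δ := hsum k

/-- Linear sparseness of `ε`-random sets (Durand–Romashchenko–Shen): if
`ρ(ℓ) = O(ℓ)`, then for every `δ > 0` there is `ε > 0` such that every
`ε`-random subset of `ℤ^d` is almost surely `ρ`-sparse, and moreover admits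
(almost surely) a partition into `ρ`-islands such that each fixed cell lies in
the `ρ`-territory of some island with probability less than `δ`. -/
theorem stmt18 {d : ℕ} (hd : 1 ≤ d) (ρ : ℕ → ℕ) (c₀ : ℕ)
    (hρ : ∀ l : ℕ, ρ l ≤ c₀ * l + c₀) :
    ∀ δ : ℝ, 0 < δ → ∃ ε : ℝ, 0 < ε ∧
      ∀ (Ω : Type) (_ : MeasurableSpace Ω) (P : Measure Ω)
        (_ : IsProbabilityMeasure P)
        (S : Ω → Set (Fin d → ℤ)),
        (∀ i : Fin d → ℤ, MeasurableSet {ω | i ∈ S ω}) →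
        (∀ I : Finset (Fin d → ℤ),
          P {ω | ↑I ⊆ S ω} ≤ ENNReal.ofReal ε ^ I.card) →
        (∀ᵐ ω ∂P, Sparse ρ (S ω)) ∧
        ∃ C : Ω → Set (Set (Fin d → ℤ)),
          (∀ᵐ ω ∂P, IsIslandPartition ρ (C ω) (S ω)) ∧
          ∀ k : Fin d → ℤ,
            P {ω | ∃ A ∈ C ω, k ∈ territory ρ A} < ENNReal.ofReal δ :=
  stmt18_general ρ c₀ hρ
end

section
/- Fix k ≥ 1 and consider the one-dimensional probabilistic cellular automaton on cells 0, 1, …, k+1 with fixed boundary values y^t_0 = y^t_{k+1} = 0 for all t, defined as follows: let (u_i^t)_{1≤i≤k, t≥1} be i.i.d. Bernoulli(1/2) random variables, and set y^{t+1}_i = y^t_{i−1} if y^t_{i−1} = y^t_{i+1}, and y^{t+1}_i = u_i^{t+1} otherwise, for 1 ≤ i ≤ k. Then there is a constant c (independent of k and of the initial configuration) such that for every initial configuration y⁰ ∈ {0,1}^{{1,…,k}}, the absorption time T := min{t : y^t_i = 0 for all 1 ≤ i ≤ k} is almost surely finite and E[T] ≤ c·k². -/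
/-!
With the same coins the update rule is monotone, so every run is dominated by the run started
from all ones, and it suffices to bound the absorption time of that run. Let `S_t` be its number
of ones and `D_t` the number of cells whose two neighbours disagree (the cells that toss a coin).
One step changes `S` by `-(x₁ + x_k)/2` plus `D_t` independent centred `±1/2` coin terms, so
`E[(k - S_{t+1})²] ≥ E[(k - S_t)²] + E[D_t]/4`; since `(k - S)² ≤ k²`, `∑_t E[D_t] ≤ 4k²`.
A configuration with no disagreeing neighbours at two consecutive times is dead, hence
`P(alive at t + 1) ≤ E[D_t] + E[D_{t+1}]`, and `E[T] ≤ ∑_t P(alive at t) ≤ 1 + 8k²`.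
-/

open Finset
open scoped ENNReal

theorem sum_range_average_neighbours {k : ℕ} (f : ℕ → ℝ) (h0 : f 0 = 0) (hk : f (k + 1) = 0) :
    ∑ i ∈ range k, (f i + f (i + 2)) / 2 = ∑ i ∈ range k, f (i + 1) - (f 1 + f k) / 2 := by
  have hleft : ∑ i ∈ range k, f i = ∑ i ∈ range k, f (i + 1) - f k := by
    rw [eq_sub_iff_add_eq, ← sum_range_succ, sum_range_succ', h0, add_zero]
  have hright : ∑ i ∈ range k, f (i + 2) = ∑ i ∈ range k, f (i + 1) - f 1 := by
    have := sum_range_succ' (fun i => f (i + 1)) k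
    rw [sum_range_succ, hk, add_zero] at this
    rw [this]; ring
  rw [← sum_div, sum_add_distrib, hleft, hright]
  ring

theorem natCast_sInf_le_tsum_indicator_compl (s : Set ℕ) :
    ((sInf s : ℕ) : ℝ≥0∞) ≤ ∑' t, sᶜ.indicator 1 t :=
  calc ((sInf s : ℕ) : ℝ≥0∞) = ∑ t ∈ range (sInf s), sᶜ.indicator (1 : ℕ → ℝ≥0∞) t := by
        rw [sum_congr rfl fun t ht => Set.indicator_of_mem (Nat.notMem_of_lt_sInf (mem_range.mp ht)) _]
        simp
    _ ≤ ∑' t, sᶜ.indicator 1 t := ENNReal.sum_le_tsum _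

theorem MeasureTheory.integral_sq_add_sum_of_orthogonal {α : Type*} [MeasurableSpace α]
    {μ : Measure α} {A : α → ℝ} {r : ℕ → α → ℝ} {n : ℕ} (hA : MemLp A 2 μ)
    (hr : ∀ i < n, MemLp (r i) 2 μ)
    (horth : ∀ m < n, ∫ a, (A a + ∑ i ∈ range m, r i a) * r m a ∂μ = 0) :
    ∫ a, (A a + ∑ i ∈ range n, r i a) ^ 2 ∂μ =
      ∫ a, A a ^ 2 ∂μ + ∑ i ∈ range n, ∫ a, r i a ^ 2 ∂μ := by
  induction n with
  | zero => simp
  | succ n ih =>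
    set X : α → ℝ := fun a => A a + ∑ i ∈ range n, r i a
    have hX : MemLp X 2 μ := hA.add (memLp_finsetSum _ fun i hi => hr i (by simp at hi; omega))
    have hrn := hr n (by omega)
    have hsq : Integrable (fun a => X a ^ 2) μ := hX.integrable_sq
    have hcross : Integrable (fun a => 2 * (X a * r n a)) μ := (hX.integrable_mul hrn).const_mul 2
    have hfirst : Integrable (fun a => X a ^ 2 + 2 * (X a * r n a)) μ := hsq.add hcross
    have hexpand : ∀ a, (A a + ∑ i ∈ range (n + 1), r i a) ^ 2 =
        (X a ^ 2 + 2 * (X a * r n a)) + r n a ^ 2 := fun a => by simp only [X, sum_range_succ]; ring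
    simp_rw [hexpand]
    rw [integral_add hfirst hrn.integrable_sq, integral_add hsq hcross, integral_const_mul,
      horth n (by omega), ih (fun i hi => hr i (by omega)) (fun m hm => horth m (by omega)),
      sum_range_succ]
    ring

theorem MeasureTheory.integral_natCast_le_of_lintegral_le {α : Type*} [MeasurableSpace α]
    {μ : Measure α} {f : α → ℕ} {N : α → ℝ≥0∞} (hN : Measurable N)
    (hfN : ∀ a, (f a : ℝ≥0∞) ≤ N a) {C : ℝ} (hC : 0 ≤ C) (hNC : ∫⁻ a, N a ∂μ ≤ ENNReal.ofReal C) :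
    ∫ a, (f a : ℝ) ∂μ ≤ C := by
  have hNC' := ne_top_of_le_ne_top ENNReal.ofReal_ne_top hNC
  have hfin : ∀ᵐ a ∂μ, N a < ∞ := ae_lt_top hN hNC'
  calc ∫ a, (f a : ℝ) ∂μ ≤ ∫ a, (N a).toReal ∂μ :=
        integral_mono_of_nonneg (ae_of_all _ fun _ => Nat.cast_nonneg _)
          (integrable_toReal_of_lintegral_ne_top hN.aemeasurable hNC')
          (hfin.mono fun a ha => by simpa using ENNReal.toReal_mono ha.ne (hfN a))
    _ = (∫⁻ a, N a ∂μ).toReal := integral_toReal hN.aemeasurable hfin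
    _ ≤ C := ENNReal.toReal_le_of_le_ofReal hC hNC

namespace TieBreakPCA

open MeasureTheory ProbabilityTheory

section Configuration

def cellRule (a b c : Bool) : Bool := if a = b then a else c

theorem cellRule_mono {a a' b b' : Bool} (c : Bool) (ha : a ≤ a') (hb : b ≤ b') :
    cellRule a b c ≤ cellRule a' b' c := by
  revert a a' b b' c; decide

noncomputable def ind (b : Bool) : ℝ := if b then 1 else 0

theorem ind_nonneg (b : Bool) : 0 ≤ ind b := by cases b <;> simp [ind]

theorem ind_le_one (b : Bool) : ind b ≤ 1 := by cases b <;> simp [ind]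

theorem abs_ind_le_one (b : Bool) : |ind b| ≤ 1 := by cases b <;> simp [ind]

theorem measurable_ind : Measurable ind := .of_discrete

theorem ind_cellRule (a b c : Bool) :
    ind (cellRule a b c) = (ind a + ind b) / 2 + ind (a != b) * (ind c - 1 / 2) := by
  cases a <;> cases b <;> cases c <;> norm_num [ind, cellRule]

variable {k : ℕ}

def step (k : ℕ) (x c : ℕ → Bool) (i : ℕ) : Bool :=
  if 1 ≤ i ∧ i ≤ k then cellRule (x (i - 1)) (x (i + 1)) (c i) else false

def IsDead (k : ℕ) (x : ℕ → Bool) : Prop := ∀ i, 1 ≤ i → i ≤ k → x i = false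

noncomputable def ones (k : ℕ) (x : ℕ → Bool) : ℝ := ∑ i ∈ range k, ind (x (i + 1))

/-- The number of cells `1 ≤ i ≤ k` whose neighbours `i - 1` and `i + 1` disagree. -/
noncomputable def discords (k : ℕ) (x : ℕ → Bool) : ℝ :=
  ∑ i ∈ range k, ind (x i != x (i + 2))

noncomputable def drift (k : ℕ) (x : ℕ → Bool) : ℝ := (ind (x 1) + ind (x k)) / 2

theorem ones_nonneg (x : ℕ → Bool) : 0 ≤ ones k x := sum_nonneg fun _ _ => ind_nonneg _

theorem ones_le (x : ℕ → Bool) : ones k x ≤ k := by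
  unfold ones; simpa using sum_le_sum fun i (_ : i ∈ range k) => ind_le_one (x (i + 1))

theorem drift_nonneg (x : ℕ → Bool) : 0 ≤ drift k x := by
  have := ind_nonneg (x 1); have := ind_nonneg (x k); unfold drift; positivity

theorem abs_ones_sub_le (x : ℕ → Bool) : |ones k x - k| ≤ k := by
  have := ones_nonneg (k := k) x; have := ones_le (k := k) x
  exact abs_le.mpr ⟨by linarith, by linarith⟩

theorem drift_le_one (x : ℕ → Bool) : drift k x ≤ 1 := by
  have := ind_le_one (x 1); have := ind_le_one (x k); unfold drift; linarith

theorem abs_ones_sub_drift_sub_le (x : ℕ → Bool) : |ones k x - drift k x - k| ≤ k + 1 := by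
  have := ones_nonneg (k := k) x; have := ones_le (k := k) x
  have := drift_nonneg (k := k) x; have := drift_le_one (k := k) x
  exact abs_le.mpr ⟨by linarith, by linarith⟩

theorem discords_nonneg (x : ℕ → Bool) : 0 ≤ discords k x := sum_nonneg fun _ _ => ind_nonneg _

theorem abs_discords_le (x : ℕ → Bool) : |discords k x| ≤ k := by
  rw [abs_of_nonneg (discords_nonneg x)]
  unfold discords; simpa using sum_le_sum fun i (_ : i ∈ range k) => ind_le_one (x i != x (i + 2))

theorem measurable_step : Measurable fun p : (ℕ → Bool) × (ℕ → Bool) => step k p.1 p.2 := by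
  refine measurable_pi_lambda _ fun i => ?_
  unfold step
  split_ifs
  · have hrule : Measurable fun b : Bool × Bool × Bool => cellRule b.1 b.2.1 b.2.2 := .of_discrete
    exact hrule.comp (f := fun p : (ℕ → Bool) × (ℕ → Bool) => (p.1 (i - 1), p.1 (i + 1), p.2 i))
      (by fun_prop)
  · exact measurable_const

theorem measurable_ones : Measurable (ones k) := by
  unfold ones; fun_prop

theorem measurable_ind_bne_apply (i j : ℕ) : Measurable fun x : ℕ → Bool => ind (x i != x j) := by
  have hbne : Measurable fun b : Bool × Bool => b.1 != b.2 := .of_discrete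
  exact measurable_ind.comp (hbne.comp (f := fun x : ℕ → Bool => (x i, x j)) (by fun_prop))

theorem measurable_discords : Measurable (discords k) :=
  Finset.measurable_sum _ fun i _ => measurable_ind_bne_apply i (i + 2)

theorem measurable_drift : Measurable (drift k) := by
  unfold drift; fun_prop

theorem measurableSet_isDead : MeasurableSet {x : ℕ → Bool | IsDead k x} := by
  simp only [IsDead, Set.ofPred_forall]
  exact .iInter fun i => .iInter fun _ => .iInter fun _ =>
    (measurableSet_singleton false).preimage (measurable_pi_apply i)

theorem ones_step (x c : ℕ → Bool) (h0 : x 0 = false) (hk : x (k + 1) = false) :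
    ones k (step k x c) = ones k x - drift k x +
      ∑ i ∈ range k, ind (x i != x (i + 2)) * (ind (c (i + 1)) - 1 / 2) := by
  have hcell : ∀ i ∈ range k, ind (step k x c (i + 1)) =
      (ind (x i) + ind (x (i + 2))) / 2 + ind (x i != x (i + 2)) * (ind (c (i + 1)) - 1 / 2) := by
    intro i hi
    have hik : i + 1 ≤ k := mem_range.mp hi
    simp only [step, le_add_iff_nonneg_left, zero_le, hik, and_self, if_true,
      Nat.add_sub_cancel, ind_cellRule]
  rw [ones, sum_congr rfl hcell, sum_add_distrib,
    sum_range_average_neighbours (fun i => ind (x i)) (by simp [h0, ind]) (by simp [hk, ind])]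
  rfl

theorem apply_two_mul_eq_false {x : ℕ → Bool} (h0 : x 0 = false)
    (hx : ∀ i, 1 ≤ i → i ≤ k → x (i - 1) = x (i + 1)) :
    ∀ j, 2 * j ≤ k + 1 → x (2 * j) = false := by
  intro j
  induction j with
  | zero => simpa using h0
  | succ j ih =>
    intro hj
    rw [show 2 * (j + 1) = 2 * j + 1 + 1 by ring, ← hx (2 * j + 1) (by omega) (by omega)]
    exact ih (by omega)

theorem forall_eq_of_discords_lt_one {x : ℕ → Bool} (hx : discords k x < 1) :
    ∀ i, 1 ≤ i → i ≤ k → x (i - 1) = x (i + 1) := by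
  intro i h1 h2
  have hle := single_le_sum (fun j _ => ind_nonneg (x j != x (j + 2)))
    (mem_range.mpr (show i - 1 < k by omega))
  rw [show i - 1 + 2 = i + 1 by omega] at hle
  by_contra hne
  have hone : ind (x (i - 1) != x (i + 1)) = 1 := by simp [ind, hne]
  rw [hone] at hle
  exact absurd (hle.trans_lt hx) (lt_irrefl 1)

/-- Without disagreeing neighbours, even cells are `0` and every cell copies its left
neighbour; doing this twice kills odd cells as well. -/
theorem one_le_discords_add_of_not_isDead {x c : ℕ → Bool} (h0 : x 0 = false)
    (halive : ¬ IsDead k (step k x c)) : 1 ≤ discords k x + discords k (step k x c) := by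
  by_contra! hlt
  have hx := forall_eq_of_discords_lt_one
    (lt_of_le_of_lt (le_add_of_nonneg_right (discords_nonneg _)) hlt)
  have hx' := forall_eq_of_discords_lt_one
    (lt_of_le_of_lt (le_add_of_nonneg_left (discords_nonneg x)) hlt)
  refine halive fun i h1 h2 => ?_
  obtain ⟨j, hj | hj⟩ := Nat.even_or_odd' i
  · subst hj
    exact apply_two_mul_eq_false (by simp [step]) hx' j (by omega)
  · have hcopy : step k x c i = x (i - 1) := by
      simp only [step, h1, h2, and_self, if_true, cellRule, hx i h1 h2]
    rw [hcopy, show i - 1 = 2 * j by omega]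
    exact apply_two_mul_eq_false h0 hx j (by omega)

end Configuration

abbrev Coin (k : ℕ) := {p : ℕ × ℕ // 1 ≤ p.1 ∧ p.1 ≤ k ∧ 1 ≤ p.2}

section Run

variable {k : ℕ} {Ω : Type*} (u : Coin k → Ω → Bool)

def newCoins (t : ℕ) (ω : Ω) (i : ℕ) : Bool :=
  if h : 1 ≤ i ∧ i ≤ k then u ⟨(i, t + 1), h.1, h.2, Nat.le_add_left 1 t⟩ ω else false

def upperRun : ℕ → Ω → ℕ → Bool
  | 0, _, i => decide (1 ≤ i ∧ i ≤ k)
  | t + 1, ω, i => step k (upperRun t ω) (newCoins u t ω) i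

theorem upperRun_eq_false {t : ℕ} {ω : Ω} {i : ℕ} (hi : ¬ (1 ≤ i ∧ i ≤ k)) :
    upperRun u t ω i = false := by
  cases t <;> simp [upperRun, step, hi]

theorem ones_upperRun_succ (t : ℕ) (ω : Ω) :
    ones k (upperRun u (t + 1) ω) = ones k (upperRun u t ω) - drift k (upperRun u t ω) +
      ∑ i ∈ range k, ind (upperRun u t ω i != upperRun u t ω (i + 2)) *
        (ind (newCoins u t ω (i + 1)) - 1 / 2) :=
  ones_step _ _ (upperRun_eq_false u (by omega)) (upperRun_eq_false u (by omega))

theorem le_upperRun (y : ℕ → Ω → ℕ → Bool)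
    (hbc : ∀ (t : ℕ) (ω : Ω), y t ω 0 = false ∧ y t ω (k + 1) = false)
    (hrec : ∀ (t : ℕ) (ω : Ω) (i : ℕ) (h1 : 1 ≤ i) (h2 : i ≤ k),
      y (t + 1) ω i =
        if y t ω (i - 1) = y t ω (i + 1) then y t ω (i - 1)
        else u ⟨(i, t + 1), h1, h2, Nat.le_add_left 1 t⟩ ω)
    (t : ℕ) (ω : Ω) : ∀ i ≤ k + 1, y t ω i ≤ upperRun u t ω i := by
  have hboundary : ∀ t i, i ≤ k + 1 → ¬ (1 ≤ i ∧ i ≤ k) → y t ω i = false := by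
    intro t i hi hik
    obtain rfl | rfl : i = 0 ∨ i = k + 1 := by omega
    exacts [(hbc t ω).1, (hbc t ω).2]
  induction t with
  | zero =>
    intro i hi
    by_cases hik : 1 ≤ i ∧ i ≤ k
    · simp [upperRun, hik]
    · simp [hboundary 0 i hi hik]
  | succ t ih =>
    intro i hi
    by_cases hik : 1 ≤ i ∧ i ≤ k
    · have hy : y (t + 1) ω i =
          cellRule (y t ω (i - 1)) (y t ω (i + 1)) (newCoins u t ω i) := by
        rw [hrec t ω i hik.1 hik.2, cellRule, newCoins, dif_pos hik]
      rw [hy, upperRun, step, if_pos hik]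
      exact cellRule_mono _ (ih _ (by omega)) (ih _ (by omega))
    · simp [hboundary (t + 1) i hi hik]

theorem isDead_of_isDead_upperRun (y : ℕ → Ω → ℕ → Bool)
    (hbc : ∀ (t : ℕ) (ω : Ω), y t ω 0 = false ∧ y t ω (k + 1) = false)
    (hrec : ∀ (t : ℕ) (ω : Ω) (i : ℕ) (h1 : 1 ≤ i) (h2 : i ≤ k),
      y (t + 1) ω i =
        if y t ω (i - 1) = y t ω (i + 1) then y t ω (i - 1)
        else u ⟨(i, t + 1), h1, h2, Nat.le_add_left 1 t⟩ ω)
    {t : ℕ} {ω : Ω} (hdead : IsDead k (upperRun u t ω)) : IsDead k (y t ω) := fun i h1 h2 =>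
  Bool.eq_false_of_le_false (hdead i h1 h2 ▸ le_upperRun u y hbc hrec t ω i (by omega))

def aliveSet (t : ℕ) : Set Ω := {ω | ¬ IsDead k (upperRun u t ω)}

noncomputable def aliveCount (ω : Ω) : ℝ≥0∞ := ∑' t, (aliveSet u t).indicator 1 ω

theorem exists_isDead_of_aliveCount_ne_top {ω : Ω} (h : aliveCount u ω ≠ ∞) :
    ∃ t, IsDead k (upperRun u t ω) := by
  by_contra! halive
  refine h ?_
  have hone : ∀ t, (aliveSet u t).indicator (1 : Ω → ℝ≥0∞) ω = 1 := fun t =>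
    Set.indicator_of_mem (halive t) _
  simp_rw [aliveCount, hone]
  exact ENNReal.tsum_const_eq_top_of_ne_zero one_ne_zero

theorem natCast_sInf_isDead_le_aliveCount {y : ℕ → Ω → ℕ → Bool} {ω : Ω}
    (hdead : ∀ t, IsDead k (upperRun u t ω) → IsDead k (y t ω)) :
    ((sInf {t | IsDead k (y t ω)} : ℕ) : ℝ≥0∞) ≤ aliveCount u ω := by
  refine (natCast_sInf_le_tsum_indicator_compl _).trans (ENNReal.tsum_le_tsum fun t => ?_)
  by_cases h : IsDead k (y t ω)
  · simp [h]
  · rw [Set.indicator_of_mem h, Set.indicator_of_mem (show ω ∈ aliveSet u t from mt (hdead t) h)]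
    exact le_rfl

end Run

section Measurability

variable {k : ℕ} {Ω : Type*} (u : Coin k → Ω → Bool)

abbrev coinSigma (S : Set (Coin k)) : MeasurableSpace Ω :=
  ⨆ p ∈ S, MeasurableSpace.comap (u p) inferInstance

theorem coinSigma_mono {S T : Set (Coin k)} (h : S ⊆ T) : coinSigma u S ≤ coinSigma u T :=
  biSup_mono h

theorem measurable_coin_of_mem {S : Set (Coin k)} {q : Coin k} (hq : q ∈ S) :
    Measurable[coinSigma u S] (u q) :=
  Measurable.of_comap_le (le_iSup₂ (f := fun p (_ : p ∈ S) => MeasurableSpace.comap (u p) _) q hq)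

theorem measurable_newCoins_apply {S : Set (Coin k)} {t i : ℕ}
    (hS : ∀ q : Coin k, q.1 = (i, t + 1) → q ∈ S) :
    Measurable[coinSigma u S] fun ω => newCoins u t ω i := by
  unfold newCoins
  split_ifs
  exacts [measurable_coin_of_mem u (hS _ rfl), measurable_const]

theorem coinSigma_measurable_upperRun (t : ℕ) :
    Measurable[coinSigma u {p | p.1.2 ≤ t}] (upperRun u t) := by
  induction t with
  | zero => exact measurable_const
  | succ t ih =>
    have hcoins : Measurable[coinSigma u {p | p.1.2 ≤ t + 1}] (newCoins u t) :=
      @measurable_pi_lambda _ _ _ (coinSigma u _) _ _ fun i =>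
        measurable_newCoins_apply u fun q hq => by simp [hq]
    have hprev := ih.mono (coinSigma_mono u fun p hp => Nat.le_succ_of_le hp) le_rfl
    exact measurable_step.comp (hprev.prodMk hcoins)

variable [MeasurableSpace Ω]

theorem coinSigma_le (hu : ∀ p, Measurable (u p)) (S : Set (Coin k)) :
    coinSigma u S ≤ ‹MeasurableSpace Ω› :=
  iSup₂_le fun p _ => (hu p).comap_le

theorem measurable_upperRun (hu : ∀ p, Measurable (u p)) (t : ℕ) : Measurable (upperRun u t) :=
  (coinSigma_measurable_upperRun u t).mono (coinSigma_le u hu _) le_rfl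

theorem measurableSet_aliveSet (hu : ∀ p, Measurable (u p)) (t : ℕ) :
    MeasurableSet (aliveSet u t) :=
  measurable_upperRun u hu t measurableSet_isDead.compl

theorem measurable_aliveCount (hu : ∀ p, Measurable (u p)) : Measurable (aliveCount u) :=
  .tsum fun t => measurable_one.indicator (measurableSet_aliveSet u hu t)

end Measurability

section Probability

variable {k : ℕ} {Ω : Type*} [MeasurableSpace Ω] (u : Coin k → Ω → Bool) {P : Measure Ω}

theorem indep_coinSigma_comap (hu : ∀ p, Measurable (u p)) (hindep : iIndepFun u P)
    {S : Set (Coin k)} {q : Coin k} (hq : q ∉ S) :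
    Indep (coinSigma u S) (MeasurableSpace.comap (u q) inferInstance) P := by
  simpa using indep_iSup_of_disjoint (fun p => (hu p).comap_le)
    ((iIndepFun_iff_iIndep _ _ _).mp hindep) (Set.disjoint_singleton_right.mpr hq)

variable [IsProbabilityMeasure P]

theorem integral_ind_coin_sub_half (hu : ∀ p, Measurable (u p))
    (hhalf : ∀ p, P {ω | u p ω = true} = 1 / 2) (q : Coin k) :
    ∫ ω, (ind (u q ω) - 1 / 2) ∂P = 0 := by
  have hs : MeasurableSet {ω | u q ω = true} := hu q (measurableSet_singleton true)
  have hind : (fun ω => ind (u q ω)) = {ω | u q ω = true}.indicator 1 := by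
    ext ω; by_cases h : u q ω <;> simp [ind, h]
  rw [integral_sub (hind ▸ (integrable_const 1).indicator hs) (integrable_const _), hind,
    integral_indicator_one hs, measureReal_def, hhalf]
  norm_num

theorem integral_mul_ind_coin_sub_half (hu : ∀ p, Measurable (u p)) (hindep : iIndepFun u P)
    (hhalf : ∀ p, P {ω | u p ω = true} = 1 / 2) {S : Set (Coin k)} {q : Coin k} (hq : q ∉ S)
    {g : Ω → ℝ} (hg : Measurable[coinSigma u S] g) :
    ∫ ω, g ω * (ind (u q ω) - 1 / 2) ∂P = 0 := by
  have hnoise : Measurable[MeasurableSpace.comap (u q) inferInstance]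
      fun ω => ind (u q ω) - 1 / 2 :=
    (measurable_ind.comp (comap_measurable (u q))).sub_const _
  have hgq : IndepFun g (fun ω => ind (u q ω) - 1 / 2) P :=
    (IndepFun_iff_Indep _ _ _).mpr <| indep_of_indep_of_le_left
      (indep_of_indep_of_le_right (indep_coinSigma_comap u hu hindep hq) hnoise.comap_le)
      hg.comap_le
  rw [hgq.integral_fun_mul_eq_mul_integral
    (hg.mono (coinSigma_le u hu S) le_rfl).aestronglyMeasurable
    (hnoise.mono (hu q).comap_le le_rfl).aestronglyMeasurable,
    integral_ind_coin_sub_half u hu hhalf q, mul_zero]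

theorem integral_mul_ind_newCoins_sub_half (hu : ∀ p, Measurable (u p))
    (hindep : iIndepFun u P) (hhalf : ∀ p, P {ω | u p ω = true} = 1 / 2)
    {S : Set (Coin k)} {t i : ℕ} (hi : 1 ≤ i ∧ i ≤ k) (hS : ∀ q : Coin k, q.1 = (i, t + 1) → q ∉ S)
    {g : Ω → ℝ} (hg : Measurable[coinSigma u S] g) :
    ∫ ω, g ω * (ind (newCoins u t ω i) - 1 / 2) ∂P = 0 := by
  simp only [newCoins, dif_pos hi]
  exact integral_mul_ind_coin_sub_half u hu hindep hhalf (hS _ rfl) hg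

theorem memLp_comp_upperRun (hu : ∀ p, Measurable (u p)) {φ : (ℕ → Bool) → ℝ}
    (hφ : Measurable φ) {C : ℝ} (hC : ∀ x, |φ x| ≤ C) (t : ℕ) (p : ℝ≥0∞) :
    MemLp (fun ω => φ (upperRun u t ω)) p P :=
  .of_bound (hφ.comp (measurable_upperRun u hu t)).aestronglyMeasurable C (ae_of_all _ fun _ => hC _)

/-- The coin terms of one step are orthogonal to each other and to the past, each with
second moment `1/4` on a disagreeing cell. -/
theorem integral_sq_ones_upperRun_succ (hu : ∀ p, Measurable (u p)) (hindep : iIndepFun u P)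
    (hhalf : ∀ p, P {ω | u p ω = true} = 1 / 2) (t : ℕ) :
    ∫ ω, (ones k (upperRun u (t + 1) ω) - k) ^ 2 ∂P =
      ∫ ω, (ones k (upperRun u t ω) - drift k (upperRun u t ω) - k) ^ 2 ∂P +
        1 / 4 * ∫ ω, discords k (upperRun u t ω) ∂P := by
  set x := upperRun u t
  set A : Ω → ℝ := fun ω => ones k (x ω) - drift k (x ω) - k
  set r : ℕ → Ω → ℝ := fun i ω =>
    ind (x ω i != x ω (i + 2)) * (ind (newCoins u t ω (i + 1)) - 1 / 2)
  have hx : ∀ S : Set (Coin k), {p | p.1.2 ≤ t} ⊆ S → Measurable[coinSigma u S] x :=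
    fun S hS => (coinSigma_measurable_upperRun u t).mono (coinSigma_mono u hS) le_rfl
  have hrmeas : ∀ S : Set (Coin k), {p | p.1.2 ≤ t} ⊆ S → ∀ i,
      (∀ q : Coin k, q.1 = (i + 1, t + 1) → q ∈ S) → Measurable[coinSigma u S] (r i) :=
    fun S hS i hi => ((measurable_ind_bne_apply _ _).comp (hx S hS)).mul
      ((measurable_ind.comp (measurable_newCoins_apply u hi)).sub_const _)
  have hA : MemLp A 2 P :=
    memLp_comp_upperRun u hu (φ := fun y => ones k y - drift k y - k)
      ((measurable_ones.sub measurable_drift).sub_const _) abs_ones_sub_drift_sub_le t 2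
  have hr : ∀ i < k, MemLp (r i) 2 P := by
    refine fun i _ => .of_bound (((hrmeas Set.univ (Set.subset_univ _) i fun _ _ => trivial).mono
      (coinSigma_le u hu _) le_rfl).aestronglyMeasurable) 1 (ae_of_all _ fun ω => ?_)
    simp only [r]
    cases x ω i != x ω (i + 2) <;> cases newCoins u t ω (i + 1) <;> norm_num [ind]
  have horth : ∀ m < k, ∫ ω, (A ω + ∑ i ∈ range m, r i ω) * r m ω ∂P = 0 := by
    intro m hm
    set S : Set (Coin k) := {p | p.1.2 ≤ t ∨ (p.1.2 = t + 1 ∧ p.1.1 ≤ m)}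
    have hpast : {p : Coin k | p.1.2 ≤ t} ⊆ S := fun p hp => Or.inl hp
    have hAm : Measurable[coinSigma u S] A :=
      ((measurable_ones.comp (hx S hpast)).sub (measurable_drift.comp (hx S hpast))).sub_const _
    have hsum : Measurable[coinSigma u S] fun ω => ∑ i ∈ range m, r i ω :=
      Finset.measurable_sum _ fun i hi => hrmeas S hpast i fun q hq =>
        Or.inr ⟨by simp [hq], by simp [hq]; exact mem_range.mp hi⟩
    simp only [r, ← mul_assoc]
    exact integral_mul_ind_newCoins_sub_half u hu hindep hhalf ⟨by omega, by omega⟩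
      (fun q hq hqS => by simp [S, hq] at hqS)
      ((hAm.add hsum).mul ((measurable_ind_bne_apply _ _).comp (hx S hpast)))
  have hsq : ∀ i ω, r i ω ^ 2 = 1 / 4 * ind (x ω i != x ω (i + 2)) := by
    intro i ω
    simp only [r]
    cases x ω i != x ω (i + 2) <;> cases newCoins u t ω (i + 1) <;> norm_num [ind]
  simp_rw [ones_upperRun_succ u t, add_sub_right_comm _ _ (k : ℝ)]
  rw [integral_sq_add_sum_of_orthogonal hA hr horth]
  simp_rw [hsq, integral_const_mul, ← mul_sum]
  rw [← integral_finsetSum]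
  · rfl
  · exact fun i _ => memLp_one_iff_integrable.mp <|
      memLp_comp_upperRun u hu (measurable_ind_bne_apply _ _) (fun _ => abs_ind_le_one _) t 1

theorem integral_discords_upperRun_le (hu : ∀ p, Measurable (u p)) (hindep : iIndepFun u P)
    (hhalf : ∀ p, P {ω | u p ω = true} = 1 / 2) (t : ℕ) :
    ∫ ω, discords k (upperRun u t ω) ∂P ≤
      4 * (∫ ω, (ones k (upperRun u (t + 1) ω) - k) ^ 2 ∂P -
        ∫ ω, (ones k (upperRun u t ω) - k) ^ 2 ∂P) := by
  have hmono : ∫ ω, (ones k (upperRun u t ω) - k) ^ 2 ∂P ≤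
      ∫ ω, (ones k (upperRun u t ω) - drift k (upperRun u t ω) - k) ^ 2 ∂P := by
    refine integral_mono
      (memLp_comp_upperRun u hu (measurable_ones.sub_const _) abs_ones_sub_le t 2).integrable_sq
      (memLp_comp_upperRun u hu ((measurable_ones.sub measurable_drift).sub_const _)
        abs_ones_sub_drift_sub_le t 2).integrable_sq fun ω => ?_
    have := ones_le (k := k) (upperRun u t ω); have := drift_nonneg (k := k) (upperRun u t ω)
    dsimp only
    nlinarith
  rw [integral_sq_ones_upperRun_succ u hu hindep hhalf t]
  linarith

theorem sum_integral_discords_upperRun_le (hu : ∀ p, Measurable (u p)) (hindep : iIndepFun u P)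
    (hhalf : ∀ p, P {ω | u p ω = true} = 1 / 2) (n : ℕ) :
    ∑ t ∈ range n, ∫ ω, discords k (upperRun u t ω) ∂P ≤ 4 * k ^ 2 := by
  set V : ℕ → ℝ := fun t => ∫ ω, (ones k (upperRun u t ω) - k) ^ 2 ∂P
  have hV0 : 0 ≤ V 0 := integral_nonneg fun _ => sq_nonneg _
  have hVn : V n ≤ k ^ 2 :=
    calc V n ≤ ∫ _, (k : ℝ) ^ 2 ∂P :=
          integral_mono (memLp_comp_upperRun u hu (measurable_ones.sub_const _) abs_ones_sub_le n
            2).integrable_sq (integrable_const _) fun _ => sq_le_sq' (abs_le.mp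
              (abs_ones_sub_le _)).1 (abs_le.mp (abs_ones_sub_le _)).2
      _ = k ^ 2 := by simp
  calc ∑ t ∈ range n, ∫ ω, discords k (upperRun u t ω) ∂P
      ≤ ∑ t ∈ range n, 4 * (V (t + 1) - V t) :=
        sum_le_sum fun t _ => integral_discords_upperRun_le u hu hindep hhalf t
    _ = 4 * (V n - V 0) := by rw [← mul_sum, sum_range_sub]
    _ ≤ 4 * k ^ 2 := by linarith

theorem measureReal_aliveSet_succ_le (hu : ∀ p, Measurable (u p)) (t : ℕ) :
    P.real (aliveSet u (t + 1)) ≤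
      ∫ ω, discords k (upperRun u t ω) ∂P + ∫ ω, discords k (upperRun u (t + 1) ω) ∂P := by
  have hD : ∀ t, Integrable (fun ω => discords k (upperRun u t ω)) P := fun t =>
    memLp_one_iff_integrable.mp <| memLp_comp_upperRun u hu measurable_discords abs_discords_le t 1
  rw [← integral_indicator_one (measurableSet_aliveSet u hu _), ← integral_add (hD t) (hD (t + 1))]
  refine integral_mono ((integrable_const 1).indicator (measurableSet_aliveSet u hu _))
    ((hD t).add (hD (t + 1))) fun ω => ?_
  by_cases halive : ω ∈ aliveSet u (t + 1)
  · rw [Set.indicator_of_mem halive]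
    exact one_le_discords_add_of_not_isDead (upperRun_eq_false u (by omega)) halive
  · rw [Set.indicator_of_notMem halive]
    exact add_nonneg (discords_nonneg _) (discords_nonneg _)

theorem sum_measureReal_aliveSet_le (hu : ∀ p, Measurable (u p)) (hindep : iIndepFun u P)
    (hhalf : ∀ p, P {ω | u p ω = true} = 1 / 2) (n : ℕ) :
    ∑ t ∈ range n, P.real (aliveSet u t) ≤ 1 + 8 * k ^ 2 := by
  set D : ℕ → ℝ := fun t => ∫ ω, discords k (upperRun u t ω) ∂P
  have hsum := sum_integral_discords_upperRun_le u hu hindep hhalf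
  have hshift : ∀ m, ∑ t ∈ range m, D (t + 1) ≤ 4 * k ^ 2 := fun m => by
    have hD0 : 0 ≤ D 0 := integral_nonneg fun _ => discords_nonneg _
    have := hsum (m + 1)
    rw [sum_range_succ'] at this
    linarith
  cases n with
  | zero => simp; positivity
  | succ m =>
    calc ∑ t ∈ range (m + 1), P.real (aliveSet u t)
        = ∑ t ∈ range m, P.real (aliveSet u (t + 1)) + P.real (aliveSet u 0) :=
          sum_range_succ' _ _
      _ ≤ ∑ t ∈ range m, (D t + D (t + 1)) + 1 :=
          add_le_add (sum_le_sum fun t _ => measureReal_aliveSet_succ_le u hu t) measureReal_le_one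
      _ ≤ 1 + 8 * k ^ 2 := by
          rw [sum_add_distrib]; linarith [hsum m, hshift m]

theorem lintegral_aliveCount_le (hu : ∀ p, Measurable (u p)) (hindep : iIndepFun u P)
    (hhalf : ∀ p, P {ω | u p ω = true} = 1 / 2) :
    ∫⁻ ω, aliveCount u ω ∂P ≤ ENNReal.ofReal (1 + 8 * k ^ 2) := by
  unfold aliveCount
  rw [lintegral_tsum fun t =>
    (measurable_one.indicator (measurableSet_aliveSet u hu t)).aemeasurable]
  simp_rw [lintegral_indicator_one (measurableSet_aliveSet u hu _)]
  refine ENNReal.tsum_le_of_sum_range_le fun n => ?_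
  calc ∑ t ∈ range n, P (aliveSet u t)
      = ENNReal.ofReal (∑ t ∈ range n, P.real (aliveSet u t)) := by
        rw [ENNReal.ofReal_sum_of_nonneg (fun _ _ => measureReal_nonneg)]
        exact sum_congr rfl fun t _ => (ofReal_measureReal).symm
    _ ≤ ENNReal.ofReal (1 + 8 * k ^ 2) :=
        ENNReal.ofReal_le_ofReal (sum_measureReal_aliveSet_le u hu hindep hhalf n)

end Probability

end TieBreakPCA

open MeasureTheory ProbabilityTheory TieBreakPCA in
/-- The one-dimensional probabilistic CA on cells `0, 1, …, k+1` with fixed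
zero boundary, where each interior cell copies the common value of its two
neighbours if they agree, and flips a fair coin otherwise, reaches the all-zero
configuration almost surely, in expected time at most `c·k²`, with `c`
independent of `k` and of the initial configuration. -/
theorem stmt19 :
    ∃ c : ℝ, 0 < c ∧
      ∀ (k : ℕ), 1 ≤ k →
        ∀ (Ω : Type) (_ : MeasurableSpace Ω) (P : Measure Ω)
          (_ : IsProbabilityMeasure P)
          (u : {p : ℕ × ℕ // 1 ≤ p.1 ∧ p.1 ≤ k ∧ 1 ≤ p.2} → Ω → Bool),
          (∀ p, Measurable (u p)) →
          iIndepFun u P →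
          (∀ p, P {ω | u p ω = true} = 1 / 2) →
          ∀ y : ℕ → Ω → (ℕ → Bool),
            (∀ (t : ℕ) (ω : Ω), y t ω 0 = false ∧ y t ω (k + 1) = false) →
            (∀ (t : ℕ) (ω : Ω) (i : ℕ) (h1 : 1 ≤ i) (h2 : i ≤ k),
              y (t + 1) ω i =
                if y t ω (i - 1) = y t ω (i + 1) then y t ω (i - 1)
                else u ⟨(i, t + 1), h1, h2, Nat.le_add_left 1 t⟩ ω) →
            P {ω | ∃ t, ∀ i, 1 ≤ i → i ≤ k → y t ω i = false} = 1 ∧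
            ∫ ω, ((sInf {t | ∀ i, 1 ≤ i → i ≤ k → y t ω i = false} : ℕ) : ℝ) ∂P ≤
              c * (k : ℝ) ^ 2 := by
  refine ⟨9, by norm_num, fun k hk Ω _ P _ u hu hindep hhalf y hbc hrec => ?_⟩
  have hdead : ∀ ω t, IsDead k (upperRun u t ω) → IsDead k (y t ω) :=
    fun _ _ => isDead_of_isDead_upperRun u y hbc hrec
  have hcount : ∫⁻ ω, aliveCount u ω ∂P ≤ ENNReal.ofReal (9 * k ^ 2) := by
    refine (lintegral_aliveCount_le u hu hindep hhalf).trans (ENNReal.ofReal_le_ofReal ?_)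
    have : (1 : ℝ) ≤ k := by exact_mod_cast hk
    nlinarith
  have hfin : ∀ᵐ ω ∂P, aliveCount u ω < ∞ :=
    ae_lt_top (measurable_aliveCount u hu) (ne_top_of_le_ne_top ENNReal.ofReal_ne_top hcount)
  refine ⟨(measure_congr (ae_eq_univ.mpr (ae_iff.mp (hfin.mono fun ω hω => ?_)))).trans
      measure_univ, integral_natCast_le_of_lintegral_le (measurable_aliveCount u hu)
      (fun ω => natCast_sInf_isDead_le_aliveCount u (hdead ω)) (by positivity) hcount⟩
  obtain ⟨t, ht⟩ := exists_isDead_of_aliveCount_ne_top u hω.ne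
  exact ⟨t, hdead ω t ht⟩
end
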